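/- arXiv:2604.12013 — 6 statements merged into one kernel-verified Lean document; each statement's English description precedes it below -/
import Mathlib

section
/- A function r : ℕ+ → ℕ+ is of the form r = r_N for some nonempty set N ⊆ ℕ if and only if r is monotone non-decreasing, subadditive, and satisfies r(1) = 1. Concretely, given such an r, the set N := {t_k : k ≥ 1}, where t_k := min{T : r(T) ≥ k} (taken over k up to sup_T r(T)), satisfies r_N = r. -/
open scoped Classical

/-- The number of points of `N` in the interval `{u+1, ..., u+T}`. -/
noncomputable def intervalCount (N : Set ℕ) (u T : ℕ) : ℕ := (N ∩ Set.Icc (u + 1) (u + T)).ncard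

/-- `r` is the interval-density function of `N`: `r T` is the maximal number of
points of `N` lying in an interval of length `T` (the maximum is attained). -/
def IsIntervalDensity (N : Set ℕ) (r : ℕ+ → ℕ+) : Prop :=
  ∀ T : ℕ+, IsGreatest {n : ℕ | ∃ u : ℕ, n = intervalCount N u (T : ℕ)} (r T)

private lemma ncard_inter_Icc (N : Set ℕ) (a b : ℕ) :
    (N ∩ Set.Icc a b).ncard = ((Finset.Icc a b).filter (fun x => x ∈ N)).card := by
  have h : N ∩ Set.Icc a b = ↑((Finset.Icc a b).filter (fun x => x ∈ N)) := by
    ext x; simp [and_comm]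
  rw [h, Set.ncard_coe_finset]

private lemma intervalCount_mono (N : Set ℕ) (u : ℕ) {a b : ℕ} (h : a ≤ b) :
    intervalCount N u a ≤ intervalCount N u b := by
  apply Set.ncard_le_ncard
  · exact Set.inter_subset_inter_right _ (Set.Icc_subset_Icc_right (by omega))
  · exact (Set.finite_Icc _ _).inter_of_right _

private lemma card_jumps (R : ℕ → ℕ) (hmono : Monotone R) (hstep : ∀ n, R (n + 1) ≤ R n + 1)
    (u T : ℕ) :
    ((Finset.Icc (u + 1) (u + T)).filter (fun s => R (s - 1) < R s)).card = R (u + T) - R u := by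
  induction T with
  | zero => simp
  | succ T ih =>
    rw [show u + (T + 1) = u + T + 1 from rfl]
    have hins : Finset.Icc (u + 1) (u + T + 1) =
        insert (u + T + 1) (Finset.Icc (u + 1) (u + T)) := by
      rw [← Finset.insert_Icc_right_eq_Icc_add_one (by omega)]
    rw [hins, Finset.filter_insert]
    have hm1 : R u ≤ R (u + T) := hmono (by omega)
    have hm2 : R (u + T) ≤ R (u + T + 1) := hmono (by omega)
    have hs := hstep (u + T)
    have hnotmem : u + T + 1 ∉ Finset.Icc (u + 1) (u + T) := by simp
    have harith : u + (T + 1) = u + T + 1 := by omega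
    split
    · rw [Finset.card_insert_of_notMem (fun h => hnotmem (Finset.mem_filter.mp h).1), ih]
      rename_i hcond
      simp only [Nat.add_sub_cancel] at hcond
      omega
    · rw [ih]
      rename_i hcond
      simp only [Nat.add_sub_cancel] at hcond
      omega

/-- Extend `r` to `ℕ` with value `0` at `0`. -/
private def Rfun (r : ℕ+ → ℕ+) (n : ℕ) : ℕ := if h : 0 < n then (r ⟨n, h⟩ : ℕ) else 0

private lemma Rfun_mono {r : ℕ+ → ℕ+} (hmono : Monotone r) : Monotone (Rfun r) := by
  intro a b hab
  unfold Rfun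
  split
  · split
    · exact_mod_cast hmono (by exact_mod_cast hab)
    · omega
  · positivity

private lemma Rfun_one {r : ℕ+ → ℕ+} (h1 : r 1 = 1) : Rfun r 1 = 1 := by
  unfold Rfun; simp [h1]

private lemma Rfun_coe (r : ℕ+ → ℕ+) (T : ℕ+) : Rfun r (T : ℕ) = (r T : ℕ) := by
  unfold Rfun
  rw [dif_pos T.pos]
  rfl

private lemma Rfun_add {r : ℕ+ → ℕ+} (hsub : ∀ T₁ T₂ : ℕ+, r (T₁ + T₂) ≤ r T₁ + r T₂)
    (a b : ℕ) : Rfun r (a + b) ≤ Rfun r a + Rfun r b := by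
  rcases Nat.eq_zero_or_pos a with ha | ha
  · subst ha; simp [Rfun]
  rcases Nat.eq_zero_or_pos b with hb | hb
  · subst hb; simp [Rfun]
  have hab : 0 < a + b := by omega
  unfold Rfun
  simp only [dif_pos ha, dif_pos hb, dif_pos hab]
  have h := hsub ⟨a, ha⟩ ⟨b, hb⟩
  have heq : (⟨a, ha⟩ + ⟨b, hb⟩ : ℕ+) = ⟨a + b, hab⟩ := rfl
  rw [heq] at h
  exact_mod_cast h

private lemma Rfun_step {r : ℕ+ → ℕ+} (hsub : ∀ T₁ T₂ : ℕ+, r (T₁ + T₂) ≤ r T₁ + r T₂)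
    (h1 : r 1 = 1) (n : ℕ) : Rfun r (n + 1) ≤ Rfun r n + 1 := by
  have h := Rfun_add hsub n 1
  rw [Rfun_one h1] at h
  exact h

/-- Membership characterization of the special set. -/
private lemma mem_Nset {r : ℕ+ → ℕ+} (hmono : Monotone r) (t : ℕ) :
    (t ∈ {t : ℕ | ∃ k : ℕ+, IsLeast {s : ℕ | ∃ hs : 0 < s, k ≤ r ⟨s, hs⟩} t}) ↔
      Rfun r (t - 1) < Rfun r t := by
  have hSk : ∀ (k : ℕ+) (s : ℕ), (s ∈ {s : ℕ | ∃ hs : 0 < s, k ≤ r ⟨s, hs⟩}) ↔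
      (k : ℕ) ≤ Rfun r s := by
    intro k s
    constructor
    · rintro ⟨hs, hk⟩
      unfold Rfun; rw [dif_pos hs]; exact_mod_cast hk
    · intro h
      have hs : 0 < s := by
        by_contra hs
        unfold Rfun at h
        rw [dif_neg hs] at h
        exact absurd h (by simp)
      refine ⟨hs, ?_⟩
      unfold Rfun at h; rw [dif_pos hs] at h; exact_mod_cast h
  constructor
  · rintro ⟨k, hk1, hk2⟩
    rw [hSk] at hk1
    have ht : 0 < t := by
      by_contra ht
      unfold Rfun at hk1
      rw [dif_neg (by omega : ¬ 0 < t)] at hk1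
      have := k.pos
      omega
    have hnot : ¬ ((k : ℕ) ≤ Rfun r (t - 1)) := by
      intro h
      have := hk2 ((hSk k (t - 1)).mpr h)
      omega
    omega
  · intro h
    have hpos : 0 < Rfun r t := by omega
    refine ⟨⟨Rfun r t, hpos⟩, (hSk _ _).mpr le_rfl, ?_⟩
    intro s hs
    replace hs := (hSk ⟨Rfun r t, hpos⟩ s).mp hs
    by_contra hlt
    push_neg at hlt
    have hle : Rfun r s ≤ Rfun r (t - 1) := Rfun_mono hmono (by omega)
    change Rfun r t ≤ Rfun r s at hs
    omega

private lemma count_Nset {r : ℕ+ → ℕ+} (hmono : Monotone r)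
    (hsub : ∀ T₁ T₂ : ℕ+, r (T₁ + T₂) ≤ r T₁ + r T₂) (h1 : r 1 = 1) (u T : ℕ) :
    intervalCount {t : ℕ | ∃ k : ℕ+, IsLeast {s : ℕ | ∃ hs : 0 < s, k ≤ r ⟨s, hs⟩} t} u T
      = Rfun r (u + T) - Rfun r u := by
  rw [intervalCount, ncard_inter_Icc,
    ← card_jumps (Rfun r) (Rfun_mono hmono) (Rfun_step hsub h1) u T]
  congr 1
  ext x
  simp only [Finset.mem_filter]
  rw [mem_Nset hmono]

private lemma density_of {r : ℕ+ → ℕ+} (hmono : Monotone r)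
    (hsub : ∀ T₁ T₂ : ℕ+, r (T₁ + T₂) ≤ r T₁ + r T₂) (h1 : r 1 = 1) :
    IsIntervalDensity {t : ℕ | ∃ k : ℕ+, IsLeast {s : ℕ | ∃ hs : 0 < s, k ≤ r ⟨s, hs⟩} t} r := by
  intro T
  constructor
  · refine ⟨0, ?_⟩
    rw [count_Nset hmono hsub h1]
    have h0 : Rfun r 0 = 0 := by simp [Rfun]
    rw [Nat.zero_add, Rfun_coe, h0]
    omega
  · rintro n ⟨u, rfl⟩
    rw [count_Nset hmono hsub h1]
    have := Rfun_add hsub u (T : ℕ)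
    rw [Rfun_coe] at this
    omega

/-- `r : ℕ+ → ℕ+` is of the form `r_N` for some nonempty `N ⊆ ℕ` iff `r` is monotone,
subadditive and `r 1 = 1`; moreover, concretely, the set `N = {t_k : k ≥ 1}` with
`t_k = min {T : r T ≥ k}` works. -/
theorem stmt_2 (r : ℕ+ → ℕ+) :
    ((∃ N : Set ℕ, N.Nonempty ∧ IsIntervalDensity N r) ↔
      (Monotone r ∧ (∀ T₁ T₂ : ℕ+, r (T₁ + T₂) ≤ r T₁ + r T₂) ∧ r 1 = 1)) ∧
    ((Monotone r ∧ (∀ T₁ T₂ : ℕ+, r (T₁ + T₂) ≤ r T₁ + r T₂) ∧ r 1 = 1) →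
      IsIntervalDensity
        {t : ℕ | ∃ k : ℕ+, IsLeast {s : ℕ | ∃ hs : 0 < s, k ≤ r ⟨s, hs⟩} t} r) := by
  have construct : (Monotone r ∧ (∀ T₁ T₂ : ℕ+, r (T₁ + T₂) ≤ r T₁ + r T₂) ∧ r 1 = 1) →
      IsIntervalDensity
        {t : ℕ | ∃ k : ℕ+, IsLeast {s : ℕ | ∃ hs : 0 < s, k ≤ r ⟨s, hs⟩} t} r := by
    rintro ⟨hmono, hsub, h1⟩
    exact density_of hmono hsub h1
  refine ⟨⟨?_, ?_⟩, construct⟩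
  · rintro ⟨N, -, hN⟩
    refine ⟨?_, ?_, ?_⟩
    · intro a b hab
      obtain ⟨u, hu⟩ := (hN a).1
      have h2 := (hN b).2 ⟨u, rfl⟩
      have hm := intervalCount_mono N u (show (a : ℕ) ≤ (b : ℕ) by exact_mod_cast hab)
      rw [← PNat.coe_le_coe]
      rw [hu]
      exact le_trans hm h2
    · intro T₁ T₂
      obtain ⟨u, hu⟩ := (hN (T₁ + T₂)).1
      have hb1 := (hN T₁).2 ⟨u, rfl⟩
      have hb2 := (hN T₂).2 ⟨u + (T₁ : ℕ), rfl⟩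
      have hsplit : intervalCount N u ((T₁ + T₂ : ℕ+) : ℕ) ≤
          intervalCount N u (T₁ : ℕ) + intervalCount N (u + (T₁ : ℕ)) (T₂ : ℕ) := by
        unfold intervalCount
        have hc : ((T₁ + T₂ : ℕ+) : ℕ) = (T₁ : ℕ) + (T₂ : ℕ) := rfl
        rw [hc]
        refine le_trans (Set.ncard_le_ncard ?_
          (((Set.finite_Icc _ _).inter_of_right _).union
            ((Set.finite_Icc _ _).inter_of_right _))) (Set.ncard_union_le _ _)
        rintro x ⟨hxN, hx⟩
        simp only [Set.mem_Icc] at hx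
        rcases le_or_gt x (u + (T₁ : ℕ)) with h | h
        · exact Or.inl ⟨hxN, by simp only [Set.mem_Icc]; omega⟩
        · exact Or.inr ⟨hxN, by simp only [Set.mem_Icc]; omega⟩
      rw [← PNat.coe_le_coe, PNat.add_coe, hu]
      exact le_trans hsplit (Nat.add_le_add hb1 hb2)
    · obtain ⟨u, hu⟩ := (hN 1).1
      have hle : intervalCount N u ((1 : ℕ+) : ℕ) ≤ 1 := by
        unfold intervalCount
        refine le_trans (Set.ncard_le_ncard Set.inter_subset_right
          (Set.finite_Icc _ _)) ?_
        rw [PNat.one_coe, Set.Icc_self, Set.ncard_singleton]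
      have hpos := (r 1).pos
      have : ((r 1 : ℕ+) : ℕ) = 1 := by omega
      exact_mod_cast this
  · intro h
    refine ⟨_, ⟨1, ?_⟩, construct h⟩
    rw [mem_Nset h.1]
    have h0 : Rfun r 0 = 0 := by simp [Rfun]
    have h1' : Rfun r 1 = 1 := Rfun_one h.2.2
    simp only [Nat.sub_self] at *
    omega
end

section
/- Let d ∈ ℕ and let 𝐓 be a rooted binary tree of depth T (every node has at most two children, distinguished as left and right) such that the maximal depth of a perfect leveled binary subtree embedded in 𝐓 is at most d. Then the number of leaves of 𝐓 is at most the sum of binomial coefficients C(T, 0) + C(T, 1) + ... + C(T, d). -/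
namespace Stmt7

/-- Subtree below the child in direction `b`. -/
def sub (A : Set (List Bool)) (b : Bool) : Set (List Bool) := {s | b :: s ∈ A}

/-- `StSh A G` : the tree `A` has a system of branch nodes whose (aligned) levels are
given by the gap list `G` (branch levels `g₁, g₁+1+g₂, …`). -/
inductive StSh : Set (List Bool) → List ℕ → Prop
  | nil {A} (h : [] ∈ A) : StSh A []
  | branch {A G} (h : [] ∈ A) (hf : StSh (sub A false) G) (ht : StSh (sub A true) G) :
      StSh A (0 :: G)
  | step {A g G} (b : Bool) (h : StSh (sub A b) (g :: G)) : StSh A ((g + 1) :: G)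

/-- The level of the depth-`i` node of the perfect subtree determined by gap list `G`. -/
def lvl : List ℕ → ℕ → ℕ
  | [], _ => 0
  | g :: _, 0 => g
  | g :: G, (i + 1) => g + 1 + lvl G i

lemma lvl_succ (g : ℕ) (G : List ℕ) (i : ℕ) : lvl ((g + 1) :: G) i = lvl (g :: G) i + 1 := by
  cases i <;> simp [lvl] <;> omega

lemma lvl_lt : ∀ (G : List ℕ) (i : ℕ), i < G.length → lvl G i < lvl G (i + 1) := by
  intro G
  induction G with
  | nil => intro i h; simp at h
  | cons g G ih =>
    intro i h
    cases i with
    | zero => simp [lvl]; omega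
    | succ i =>
      simp only [lvl]
      have := ih i (by simpa using h)
      omega

lemma lvl_lt_of_lt (G : List ℕ) {i j : ℕ} (hij : i < j) (hj : j ≤ G.length) :
    lvl G i < lvl G j := by
  induction j with
  | zero => omega
  | succ j ih =>
    have hj' : j < G.length := by omega
    rcases Nat.lt_or_ge i j with h | h
    · exact lt_trans (ih h (le_of_lt hj')) (lvl_lt G j hj')
    · have : i = j := by omega
      subst this; exact lvl_lt G i hj'

lemma lvl_inj (G : List ℕ) {i j : ℕ} (hi : i ≤ G.length) (hj : j ≤ G.length)
    (h : lvl G i = lvl G j) : i = j := by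
  rcases Nat.lt_trichotomy i j with h' | h' | h'
  · exact absurd h (Nat.ne_of_lt (lvl_lt_of_lt G h' hj))
  · exact h'
  · exact absurd h.symm (Nat.ne_of_lt (lvl_lt_of_lt G h' hi))

lemma lvl_lt_rev (G : List ℕ) {i j : ℕ} (hi : i ≤ G.length) (hj : j ≤ G.length)
    (h : lvl G i < lvl G j) : i < j := by
  rcases Nat.lt_or_ge i j with h' | h'
  · exact h'
  · rcases Nat.lt_or_ge j i with h'' | h''
    · have := lvl_lt_of_lt G h'' hi; omega
    · have : i = j := by omega
      subst this; omega

lemma sub_closed {A : Set (List Bool)} (hA : ∀ s t : List Bool, s <+: t → t ∈ A → s ∈ A)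
    (b : Bool) : ∀ s t : List Bool, s <+: t → t ∈ sub A b → s ∈ sub A b := by
  intro s t hst ht
  exact hA (b :: s) (b :: t) (List.cons_prefix_cons.mpr ⟨rfl, hst⟩) ht

lemma exists_witness {A : Set (List Bool)} {G : List ℕ} (h : StSh A G) :
    (∀ s t : List Bool, s <+: t → t ∈ A → s ∈ A) →
    ∃ N : List Bool → List Bool,
      (∀ s : List Bool, s.length ≤ G.length → N s ∈ A ∧ (N s).length = lvl G s.length) ∧
      (∀ (s : List Bool) (b : Bool), s.length < G.length → (N s ++ [b]) <+: N (s ++ [b])) := by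
  induction h with
  | @nil A h =>
    intro _
    refine ⟨fun _ => [], ?_, ?_⟩
    · intro s hs
      exact ⟨h, by cases s.length <;> rfl⟩
    · intro s b hs; simp at hs
  | @branch A G h hf ht ihf iht =>
    intro hA
    obtain ⟨Nf, hNf, hNf2⟩ := ihf (sub_closed hA false)
    obtain ⟨Nt, hNt, hNt2⟩ := iht (sub_closed hA true)
    refine ⟨fun s => match s with | [] => [] | (b :: s') => b :: (cond b Nt Nf) s', ?_, ?_⟩
    · rintro (_ | ⟨b, s'⟩) hs
      · exact ⟨h, rfl⟩
      · have hs' : s'.length ≤ G.length := by simpa using hs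
        cases b
        · exact ⟨(hNf s' hs').1, by simp [lvl, (hNf s' hs').2]; omega⟩
        · exact ⟨(hNt s' hs').1, by simp [lvl, (hNt s' hs').2]; omega⟩
    · rintro (_ | ⟨c, s'⟩) b hs
      · exact List.cons_prefix_cons.mpr ⟨rfl, List.nil_prefix⟩
      · have hs' : s'.length < G.length := by simpa using hs
        cases c
        · exact List.cons_prefix_cons.mpr ⟨rfl, hNf2 s' b hs'⟩
        · exact List.cons_prefix_cons.mpr ⟨rfl, hNt2 s' b hs'⟩
  | @step A g G b h ih =>
    intro hA
    obtain ⟨N, hN, hN2⟩ := ih (sub_closed hA b)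
    refine ⟨fun s => b :: N s, ?_, ?_⟩
    · intro s hs
      have hs' : s.length ≤ (g :: G).length := by simpa using hs
      refine ⟨(hN s hs').1, ?_⟩
      simp only [List.length_cons, lvl_succ, (hN s hs').2]
    · intro s c hs
      exact List.cons_prefix_cons.mpr ⟨rfl, hN2 s c (by simpa using hs)⟩
lemma chain {G : List ℕ} {A : Set (List Bool)} {N : List Bool → List Bool}
    (hN : ∀ s : List Bool, s.length ≤ G.length → N s ∈ A ∧ (N s).length = lvl G s.length)
    (hN2 : ∀ (s : List Bool) (b : Bool), s.length < G.length → (N s ++ [b]) <+: N (s ++ [b])) :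
    ∀ t : List Bool, t.length ≤ G.length → ∀ (u : List Bool) (b : Bool),
      (u ++ [b]) <+: t → N u ++ [b] <+: N t := by
  intro t
  induction t using List.reverseRecOn with
  | nil =>
    intro _ u b hp
    have := hp.length_le; simp at this
  | append_singleton l c ih =>
    intro ht u b hp
    have hl : l.length < G.length := by
      have := ht; simp at this; omega
    rcases List.prefix_concat_iff.mp hp with heq | hpre
    · obtain ⟨h1, h2⟩ := List.append_inj' heq rfl
      have hb : b = c := by simpa using h2
      rw [h1, hb]
      exact hN2 l c hl
    · have h1 : N u ++ [b] <+: N l := ih (le_of_lt hl) u b hpre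
      have h2 : N l ++ [c] <+: N (l ++ [c]) := hN2 l c hl
      exact h1.trans ((List.prefix_append (N l) [c]).trans h2)

lemma exists_diverge : ∀ (s t : List Bool), s.length = t.length → s ≠ t →
    ∃ (u : List Bool) (c c' : Bool), c ≠ c' ∧ (u ++ [c]) <+: s ∧ (u ++ [c']) <+: t := by
  intro s
  induction s with
  | nil =>
    intro t h hne
    cases t with
    | nil => exact absurd rfl hne
    | cons b t => simp at h
  | cons a s ih =>
    intro t h hne
    cases t with
    | nil => simp at h
    | cons b t =>
      by_cases hab : a = b
      · subst hab
        have hst : s ≠ t := fun hh => hne (by rw [hh])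
        obtain ⟨u, c, c', h1, h2, h3⟩ := ih t (by simpa using h) hst
        exact ⟨a :: u, c, c', h1, List.cons_prefix_cons.mpr ⟨rfl, h2⟩,
          List.cons_prefix_cons.mpr ⟨rfl, h3⟩⟩
      · exact ⟨[], a, b, hab, List.cons_prefix_cons.mpr ⟨rfl, List.nil_prefix⟩,
          List.cons_prefix_cons.mpr ⟨rfl, List.nil_prefix⟩⟩
lemma stsh_length_le {d : ℕ} {Tr : Set (List Bool)}
    (hclosed : ∀ s t : List Bool, s <+: t → t ∈ Tr → s ∈ Tr)
    (hnoembed : ¬ ∃ ι : List Bool → List Bool,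
      (∀ s : List Bool, s.length ≤ d + 1 → ι s ∈ Tr) ∧
      Set.InjOn ι {s : List Bool | s.length ≤ d + 1} ∧
      (∀ s t : List Bool, s.length ≤ d + 1 → t.length ≤ d + 1 → ∀ b : Bool,
        ((s ++ [b]) <+: t ↔ (ι s ++ [b]) <+: ι t)) ∧
      (∀ s t : List Bool, s.length ≤ d + 1 → t.length ≤ d + 1 →
        (s.length = t.length ↔ (ι s).length = (ι t).length)))
    {G : List ℕ} (hG : StSh Tr G) : G.length ≤ d := by
  by_contra hlen
  have hd1 : d + 1 ≤ G.length := by omega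
  obtain ⟨N, hN, hN2⟩ := exists_witness hG hclosed
  have hch := chain hN hN2
  have hinj : Set.InjOn N {s : List Bool | s.length ≤ d + 1} := by
    intro s hs t ht he
    simp only [Set.mem_setOf_eq] at hs ht
    have hsl : s.length ≤ G.length := le_trans hs hd1
    have htl : t.length ≤ G.length := le_trans ht hd1
    have hlvl : lvl G s.length = lvl G t.length := by
      rw [← (hN s hsl).2, ← (hN t htl).2, he]
    have hlen2 : s.length = t.length := lvl_inj G hsl htl hlvl
    by_contra hne
    obtain ⟨u, c, c', hcc, hcs, hct⟩ := exists_diverge s t hlen2 hne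
    have h1 : N u ++ [c] <+: N s := hch s hsl u c hcs
    have h2 : N u ++ [c'] <+: N s := he ▸ hch t htl u c' hct
    have h3 : N u ++ [c] = N u ++ [c'] :=
      (List.prefix_of_prefix_length_le h1 h2 (by simp)).eq_of_length (by simp)
    exact hcc (by simpa using h3)
  apply hnoembed
  refine ⟨N, ?_, hinj, ?_, ?_⟩
  · intro s hs; exact (hN s (le_trans hs hd1)).1
  · intro s t hs ht b
    have hsl : s.length ≤ G.length := le_trans hs hd1
    have htl : t.length ≤ G.length := le_trans ht hd1
    constructor
    · intro hp; exact hch t htl s b hp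
    · intro hp
      have hle := hp.length_le
      have e1 := (hN s hsl).2
      have e2 := (hN t htl).2
      have hlt : s.length < t.length := by
        apply lvl_lt_rev G hsl htl
        simp only [List.length_append, List.length_singleton] at hle
        omega
      have hc : t.take s.length ++ [t[s.length]'hlt] <+: t := by
        have h3 := List.take_concat_get hlt
        rw [List.concat_eq_append] at h3
        rw [h3]
        exact List.take_prefix _ _
      have hul : (t.take s.length).length = s.length := by
        simp; omega
      have hulG : (t.take s.length).length ≤ G.length := by omega
      have h4 : N (t.take s.length) ++ [t[s.length]'hlt] <+: N t :=
        hch t htl _ _ hc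
      have hlen5 : (N (t.take s.length) ++ [t[s.length]'hlt]).length
          = (N s ++ [b]).length := by
        simp [(hN _ hulG).2, (hN s hsl).2, hul]
      have he5 : N (t.take s.length) ++ [t[s.length]'hlt] = N s ++ [b] :=
        (List.prefix_of_prefix_length_le h4 hp (le_of_eq hlen5)).eq_of_length hlen5
      obtain ⟨he6, he7⟩ := List.append_inj' he5 rfl
      have hus : t.take s.length = s := by
        apply hinj _ hs he6
        simp only [Set.mem_setOf_eq]
        omega
      have hxb : t[s.length]'hlt = b := by simpa using he7
      rw [← hus, ← hxb]
      exact hc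
  · intro s t hs ht
    have hsl : s.length ≤ G.length := le_trans hs hd1
    have htl : t.length ≤ G.length := le_trans ht hd1
    constructor
    · intro h; rw [(hN s hsl).2, (hN t htl).2, h]
    · intro h
      apply lvl_inj G hsl htl
      rw [← (hN s hsl).2, ← (hN t htl).2]
      exact h
lemma stsh_bound {A : Set (List Bool)} {G : List ℕ} (h : StSh A G) :
    ∃ s ∈ A, G.sum + G.length ≤ s.length := by
  induction h with
  | @nil A h => exact ⟨[], h, by simp⟩
  | @branch A G h hf ht ihf iht =>
    obtain ⟨s, hs, hl⟩ := ihf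
    refine ⟨false :: s, hs, ?_⟩
    simp only [List.sum_cons, List.length_cons]
    omega
  | @step A g G b h ih =>
    obtain ⟨s, hs, hl⟩ := ih
    refine ⟨b :: s, hs, ?_⟩
    simp only [List.sum_cons, List.length_cons] at hl ⊢
    omega

/-- Partial sums of a gap list, with offset `o`. -/
def pf : ℕ → List ℕ → Finset ℕ
  | _, [] => ∅
  | o, g :: G => insert (o + g) (pf (o + g + 1) G)

lemma pf_ge : ∀ (G : List ℕ) (o x : ℕ), x ∈ pf o G → o ≤ x := by
  intro G
  induction G with
  | nil => intro o x hx; simp [pf] at hx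
  | cons g G ih =>
    intro o x hx
    simp only [pf, Finset.mem_insert] at hx
    rcases hx with rfl | hx
    · omega
    · have := ih _ _ hx; omega

lemma pf_lt : ∀ (G : List ℕ) (o x : ℕ), x ∈ pf o G → x + 1 ≤ o + G.sum + G.length := by
  intro G
  induction G with
  | nil => intro o x hx; simp [pf] at hx
  | cons g G ih =>
    intro o x hx
    simp only [pf, Finset.mem_insert] at hx
    simp only [List.sum_cons, List.length_cons]
    rcases hx with rfl | hx
    · omega
    · have := ih _ _ hx; omega

lemma pf_card : ∀ (G : List ℕ) (o : ℕ), (pf o G).card = G.length := by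
  intro G
  induction G with
  | nil => intro o; simp [pf]
  | cons g G ih =>
    intro o
    have hni : o + g ∉ pf (o + g + 1) G := fun hh => by have := pf_ge _ _ _ hh; omega
    simp [pf, Finset.card_insert_of_notMem hni, ih]

lemma pf_inj : ∀ (G G' : List ℕ) (o : ℕ), pf o G = pf o G' → G = G' := by
  intro G
  induction G with
  | nil =>
    intro G' o h
    cases G' with
    | nil => rfl
    | cons g' G'' =>
      exfalso
      have : o + g' ∈ pf o ([] : List ℕ) := by rw [h]; simp [pf]
      simp [pf] at this
  | cons g G ih =>
    intro G' o h
    cases G' with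
    | nil =>
      exfalso
      have : o + g ∈ pf o ([] : List ℕ) := by rw [← h]; simp [pf]
      simp [pf] at this
    | cons g' G'' =>
      have h1 : o + g ∈ pf o (g' :: G'') := by rw [← h]; simp [pf]
      have h2 : o + g' ∈ pf o (g :: G) := by rw [h]; simp [pf]
      simp only [pf, Finset.mem_insert] at h1 h2
      have hg : g = g' := by
        rcases h1 with h1 | h1
        · omega
        · rcases h2 with h2 | h2
          · omega
          · have := pf_ge _ _ _ h1; have := pf_ge _ _ _ h2; omega
      subst hg
      have hni : o + g ∉ pf (o + g + 1) G := fun hh => by have := pf_ge _ _ _ hh; omega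
      have hni' : o + g ∉ pf (o + g + 1) G'' := fun hh => by have := pf_ge _ _ _ hh; omega
      have htail : pf (o + g + 1) G = pf (o + g + 1) G'' := by
        have h3 := congrArg (fun X => Finset.erase X (o + g)) h
        simpa [pf, Finset.erase_insert hni, Finset.erase_insert hni'] using h3
      rw [ih G'' (o + g + 1) htail]

lemma finite_bound (T : ℕ) : {G : List ℕ | G.sum + G.length ≤ T}.Finite := by
  apply Set.Finite.of_finite_image (f := pf 0)
  · apply Set.Finite.subset ((Finset.range T).powerset : Finset (Finset ℕ)).finite_toSet
    rintro X ⟨G, hG, rfl⟩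
    simp only [Finset.coe_powerset, Set.mem_preimage, Set.mem_powerset_iff,
      Finset.coe_range]
    intro x hx
    have := pf_lt G 0 x hx
    simp only [Set.mem_setOf_eq] at hG
    simp only [Set.mem_Iio]
    omega
  · intro a _ b _ hab
    exact pf_inj a b 0 hab

lemma stsh_finite {A : Set (List Bool)} {T : ℕ} (hdep : ∀ s ∈ A, s.length ≤ T) :
    {G : List ℕ | StSh A G}.Finite := by
  apply Set.Finite.subset (finite_bound T)
  intro G hG
  obtain ⟨s, hs, hl⟩ := stsh_bound hG
  exact le_trans hl (hdep s hs)

lemma tree_finite {A : Set (List Bool)} {T : ℕ} (hdep : ∀ s ∈ A, s.length ≤ T) :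
    A.Finite :=
  Set.Finite.subset (List.finite_length_le Bool T) hdep
/-- The shift map on gap lists: corresponds to pushing a branch-node system one
level deeper. -/
def shf : List ℕ → List ℕ
  | [] => []
  | g :: G => (g + 1) :: G

lemma shf_injective : Function.Injective shf := by
  intro a b h
  cases a with
  | nil => cases b with
    | nil => rfl
    | cons g G => simp [shf] at h
  | cons g G => cases b with
    | nil => simp [shf] at h
    | cons g' G' =>
      simp only [shf, List.cons.injEq] at h
      obtain ⟨h1, h2⟩ := h
      simp [h2]
      omega

lemma pajor (T : ℕ) : ∀ (A : Set (List Bool)),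
    (∀ s t : List Bool, s <+: t → t ∈ A → s ∈ A) →
    (∀ s ∈ A, s.length ≤ T) →
    {s | s ∈ A ∧ ∀ b : Bool, s ++ [b] ∉ A}.ncard ≤ {G : List ℕ | StSh A G}.ncard := by
  induction T with
  | zero =>
    intro A hcl hdep
    by_cases hA : A.Nonempty
    · obtain ⟨s0, hs0⟩ := hA
      have hroot : [] ∈ A := hcl [] s0 List.nil_prefix hs0
      have hsub : A ⊆ {[]} := by
        intro s hs
        have := hdep s hs
        simpa using List.length_eq_zero_iff.mp (Nat.le_zero.mp this)
      have hleq : {s | s ∈ A ∧ ∀ b : Bool, s ++ [b] ∉ A} = {[]} := by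
        ext s
        constructor
        · rintro ⟨h1, _⟩; exact hsub h1
        · rintro rfl
          refine ⟨hroot, fun b hb => ?_⟩
          have := hsub hb
          simp at this
      rw [hleq, Set.ncard_singleton]
      have h1 : (0 : ℕ) < {G : List ℕ | StSh A G}.ncard := by
        rw [Set.ncard_pos (stsh_finite (T := 0) hdep)]
        exact ⟨[], StSh.nil hroot⟩
      omega
    · rw [Set.not_nonempty_iff_eq_empty] at hA
      subst hA
      simp
  | succ T ih =>
    intro A hcl hdep
    by_cases hA : A.Nonempty
    swap
    · rw [Set.not_nonempty_iff_eq_empty] at hA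
      subst hA
      simp
    obtain ⟨s0, hs0⟩ := hA
    have hroot : [] ∈ A := hcl [] s0 List.nil_prefix hs0
    by_cases hb : ∃ b : Bool, [b] ∈ A
    swap
    · push_neg at hb
      have hsub : A ⊆ {[]} := by
        intro s hs
        cases s with
        | nil => rfl
        | cons c s' =>
          exact absurd (hcl [c] (c :: s')
            (List.cons_prefix_cons.mpr ⟨rfl, List.nil_prefix⟩) hs) (hb c)
      have hleq : {s | s ∈ A ∧ ∀ b : Bool, s ++ [b] ∉ A} = {[]} := by
        ext s
        constructor
        · rintro ⟨h1, _⟩; exact hsub h1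
        · rintro rfl
          refine ⟨hroot, fun b hb2 => ?_⟩
          have := hsub hb2
          simp at this
      rw [hleq, Set.ncard_singleton]
      have h1 : (0 : ℕ) < {G : List ℕ | StSh A G}.ncard := by
        rw [Set.ncard_pos (stsh_finite hdep)]
        exact ⟨[], StSh.nil hroot⟩
      omega
    · obtain ⟨b0, hb0⟩ := hb
      set A0 := sub A false with hA0
      set A1 := sub A true with hA1
      have hcl0 := sub_closed hcl false
      have hcl1 := sub_closed hcl true
      have hdep0 : ∀ s ∈ A0, s.length ≤ T := by
        intro s hs
        have := hdep (false :: s) hs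
        simpa using this
      have hdep1 : ∀ s ∈ A1, s.length ≤ T := by
        intro s hs
        have := hdep (true :: s) hs
        simpa using this
      -- leaves decomposition
      have hdecomp : {s | s ∈ A ∧ ∀ b : Bool, s ++ [b] ∉ A} =
          (List.cons false) '' {s | s ∈ A0 ∧ ∀ b : Bool, s ++ [b] ∉ A0} ∪
          (List.cons true) '' {s | s ∈ A1 ∧ ∀ b : Bool, s ++ [b] ∉ A1} := by
        ext s
        constructor
        · rintro ⟨hsA, hleaf⟩
          cases s with
          | nil => exact absurd hb0 (by simpa using hleaf b0)
          | cons c s' =>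
            cases c
            · exact Or.inl ⟨s', ⟨hsA, fun b hbb => hleaf b hbb⟩, rfl⟩
            · exact Or.inr ⟨s', ⟨hsA, fun b hbb => hleaf b hbb⟩, rfl⟩
        · rintro (⟨s', ⟨h1, h2⟩, rfl⟩ | ⟨s', ⟨h1, h2⟩, rfl⟩)
          · exact ⟨h1, fun b hbb => h2 b hbb⟩
          · exact ⟨h1, fun b hbb => h2 b hbb⟩
      have hfin0 : {s | s ∈ A0 ∧ ∀ b : Bool, s ++ [b] ∉ A0}.Finite :=
        Set.Finite.subset (tree_finite hdep0) (fun s hs => hs.1)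
      have hfin1 : {s | s ∈ A1 ∧ ∀ b : Bool, s ++ [b] ∉ A1}.Finite :=
        Set.Finite.subset (tree_finite hdep1) (fun s hs => hs.1)
      have hLHS : {s | s ∈ A ∧ ∀ b : Bool, s ++ [b] ∉ A}.ncard =
          {s | s ∈ A0 ∧ ∀ b : Bool, s ++ [b] ∉ A0}.ncard +
          {s | s ∈ A1 ∧ ∀ b : Bool, s ++ [b] ∉ A1}.ncard := by
        rw [hdecomp, Set.ncard_union_eq ?_ (hfin0.image _) (hfin1.image _),
          Set.ncard_image_of_injective _ (fun a b h => by simpa using h),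
          Set.ncard_image_of_injective _ (fun a b h => by simpa using h)]
        · rw [Set.disjoint_left]
          rintro x ⟨u, _, rfl⟩ ⟨v, _, hv⟩
          simp at hv
      -- shattering families
      set S0 := {G : List ℕ | StSh A0 G} with hS0
      set S1 := {G : List ℕ | StSh A1 G} with hS1
      have hfinS0 : S0.Finite := stsh_finite hdep0
      have hfinS1 : S1.Finite := stsh_finite hdep1
      have hfinS : {G : List ℕ | StSh A G}.Finite := stsh_finite hdep
      have hsub2 : shf '' (S0 ∪ S1) ∪ (List.cons 0) '' (S0 ∩ S1) ⊆
          {G : List ℕ | StSh A G} := by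
        rintro G (⟨G', hG', rfl⟩ | ⟨G', ⟨hG'0, hG'1⟩, rfl⟩)
        · cases G' with
          | nil => exact StSh.nil hroot
          | cons g G'' =>
            rcases hG' with hG' | hG'
            · exact StSh.step false hG'
            · exact StSh.step true hG'
        · exact StSh.branch hroot hG'0 hG'1
      have hdisj : Disjoint (shf '' (S0 ∪ S1)) ((List.cons 0) '' (S0 ∩ S1)) := by
        rw [Set.disjoint_left]
        rintro x ⟨u, _, rfl⟩ ⟨v, _, hv⟩
        cases u with
        | nil => simp [shf] at hv
        | cons g G => simp [shf, List.cons.injEq] at hv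
      calc {s | s ∈ A ∧ ∀ b : Bool, s ++ [b] ∉ A}.ncard
          = {s | s ∈ A0 ∧ ∀ b : Bool, s ++ [b] ∉ A0}.ncard +
            {s | s ∈ A1 ∧ ∀ b : Bool, s ++ [b] ∉ A1}.ncard := hLHS
        _ ≤ S0.ncard + S1.ncard := by
            have h1 := ih A0 hcl0 hdep0
            have h2 := ih A1 hcl1 hdep1
            rw [hS0, hS1]
            omega
        _ = (S0 ∪ S1).ncard + (S0 ∩ S1).ncard :=
            (Set.ncard_union_add_ncard_inter S0 S1 hfinS0 hfinS1).symm
        _ = (shf '' (S0 ∪ S1)).ncard + ((List.cons 0) '' (S0 ∩ S1)).ncard := by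
            rw [Set.ncard_image_of_injective _ shf_injective,
              Set.ncard_image_of_injective _ (fun a b h => by simpa using h)]
        _ = (shf '' (S0 ∪ S1) ∪ (List.cons 0) '' (S0 ∩ S1)).ncard := by
            rw [Set.ncard_union_eq hdisj ((hfinS0.union hfinS1).image _)
              ((hfinS0.subset Set.inter_subset_left).image _)]
        _ ≤ {G : List ℕ | StSh A G}.ncard := Set.ncard_le_ncard hsub2 hfinS

end Stmt7

/-- Sauer-type lemma for leveled subtrees: if a rooted binary tree `Tr` of depth `T`
(modelled as a prefix-closed set of binary strings of length ≤ `T`) contains no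
perfect leveled binary subtree of depth `d + 1`, then the number of its leaves is at
most `∑_{i ≤ d} C(T, i)`. -/
theorem stmt_7 (T d : ℕ) (Tr : Set (List Bool))
    (hroot : [] ∈ Tr)
    (hclosed : ∀ s t : List Bool, s <+: t → t ∈ Tr → s ∈ Tr)
    (hdepth : ∀ s ∈ Tr, s.length ≤ T)
    (hnoembed : ¬ ∃ ι : List Bool → List Bool,
      (∀ s : List Bool, s.length ≤ d + 1 → ι s ∈ Tr) ∧
      Set.InjOn ι {s : List Bool | s.length ≤ d + 1} ∧
      (∀ s t : List Bool, s.length ≤ d + 1 → t.length ≤ d + 1 → ∀ b : Bool,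
        ((s ++ [b]) <+: t ↔ (ι s ++ [b]) <+: ι t)) ∧
      (∀ s t : List Bool, s.length ≤ d + 1 → t.length ≤ d + 1 →
        (s.length = t.length ↔ (ι s).length = (ι t).length))) :
    {s ∈ Tr | ∀ b : Bool, s ++ [b] ∉ Tr}.ncard ≤
      ∑ i ∈ Finset.range (d + 1), Nat.choose T i := by
  have h1 := Stmt7.pajor T Tr hclosed hdepth
  set P : Finset (Finset ℕ) :=
    (Finset.range (d + 1)).biUnion (fun i => Finset.powersetCard i (Finset.range T))
    with hP
  have h2 : {G : List ℕ | Stmt7.StSh Tr G}.ncard ≤ (P : Set (Finset ℕ)).ncard := by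
    apply Set.ncard_le_ncard_of_injOn (Stmt7.pf 0)
    · intro G hG
      simp only [Set.mem_setOf_eq] at hG
      have hlen := Stmt7.stsh_length_le hclosed hnoembed hG
      obtain ⟨s, hs, hl⟩ := Stmt7.stsh_bound hG
      have hT : G.sum + G.length ≤ T := le_trans hl (hdepth s hs)
      apply Finset.mem_coe.mpr
      apply Finset.mem_biUnion.mpr
      refine ⟨G.length, by simp; omega, Finset.mem_powersetCard.mpr ⟨?_, Stmt7.pf_card G 0⟩⟩
      intro x hx
      rw [Finset.mem_range]
      have := Stmt7.pf_lt G 0 x hx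
      omega
    · intro a _ b _ hab
      exact Stmt7.pf_inj a b 0 hab
  have h3 : (P : Set (Finset ℕ)).ncard = ∑ i ∈ Finset.range (d + 1), Nat.choose T i := by
    rw [Set.ncard_coe_finset, hP, Finset.card_biUnion]
    · simp [Finset.card_powersetCard]
    · intro x _ y _ hxy
      rw [Function.onFun, Finset.disjoint_left]
      intro a ha ha'
      rw [Finset.mem_powersetCard] at ha ha'
      exact hxy (by rw [← ha.2, ha'.2])
  omega
end

section
/- Let F be the class of autoregressive next-bit predictors f_a, indexed by infinite binary sequences a ∈ {0,1}^ℕ, where f_a(x) = a_{|x|+1} if x is a prefix of a and f_a(x) = 0 otherwise. Then VC(F) ≤ 1; that is, no two distinct binary strings are simultaneously shattered by F. -/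
/-! `f_a` fires on `x` exactly when `x ++ [1]` is an initial segment of `a`. Two such marked
strings of the same `a` are prefix-comparable, and whenever `f_b` fires on the longer one,
`b` also starts with the shorter one, so `f_b` fires on both. Hence the labelings `(1, 1)` and
`(0, 1)` (or `(1, 0)`) are never realized together. -/

/-- The autoregressive next-bit predictor indexed by the infinite sequence `a`:
it outputs the next bit of `a` on prefixes of `a`, and `0` (i.e. `false`) elsewhere. -/
def fa (a : ℕ → Bool) (x : List Bool) : Bool :=
  if x = List.ofFn (fun i : Fin x.length => a i) then a x.length else false

theorem take_map_range_of_le {α : Type*} (a : ℕ → α) {m n : ℕ} (h : m ≤ n) :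
    ((List.range n).map a).take m = (List.range m).map a := by
  rw [← List.map_take, List.take_range, min_eq_left h]

theorem fa_eq_true_iff {a : ℕ → Bool} {x : List Bool} :
    fa a x = true ↔ x ++ [true] = (List.range (x.length + 1)).map a := by
  have hofFn : List.ofFn (fun i : Fin x.length => a i) = (List.range x.length).map a :=
    List.ext_getElem (by simp) (by simp)
  rw [List.range_succ, List.map_append, List.map_singleton, List.append_singleton_inj, fa, hofFn]
  split_ifs with hx
  · exact ⟨fun h => ⟨hx, h.symm⟩, fun h => h.2.symm⟩
  · simp [hx]

theorem prefix_of_fa_eq_true {a : ℕ → Bool} {x₁ x₂ : List Bool} (h₁ : fa a x₁ = true)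
    (h₂ : fa a x₂ = true) (hle : x₁.length ≤ x₂.length) : x₁ ++ [true] <+: x₂ ++ [true] := by
  rw [fa_eq_true_iff] at h₁ h₂
  rw [List.prefix_iff_eq_take, h₁, h₂, List.length_map, List.length_range,
    take_map_range_of_le a (by omega)]

theorem fa_eq_true_of_prefix {b : ℕ → Bool} {x₁ x₂ : List Bool} (h : x₁ ++ [true] <+: x₂ ++ [true])
    (hb : fa b x₂ = true) : fa b x₁ = true := by
  rw [fa_eq_true_iff] at hb ⊢
  have hle : x₁.length ≤ x₂.length := by simpa using h.length_le
  rw [List.prefix_iff_eq_take.mp h, hb, List.length_append, List.length_singleton,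
    take_map_range_of_le b (by omega)]

theorem stmt_14_general (x₁ x₂ : List Bool) :
    ¬ (∀ y₁ y₂ : Bool, ∃ a : ℕ → Bool, fa a x₁ = y₁ ∧ fa a x₂ = y₂) := by
  intro h
  obtain ⟨a, ha₁, ha₂⟩ := h true true
  rcases le_total x₁.length x₂.length with hle | hle
  · obtain ⟨b, hb₁, hb₂⟩ := h false true
    simp [fa_eq_true_of_prefix (prefix_of_fa_eq_true ha₁ ha₂ hle) hb₂] at hb₁
  · obtain ⟨b, hb₁, hb₂⟩ := h true false
    simp [fa_eq_true_of_prefix (prefix_of_fa_eq_true ha₂ ha₁ hle) hb₁] at hb₂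

/-- The class `{f_a : a ∈ {0,1}^ℕ}` has VC dimension at most 1: no pair of distinct
strings is shattered. -/
theorem stmt_14 (x₁ x₂ : List Bool) (hne : x₁ ≠ x₂) :
    ¬ (∀ y₁ y₂ : Bool, ∃ a : ℕ → Bool, fa a x₁ = y₁ ∧ fa a x₂ = y₂) :=
  stmt_14_general x₁ x₂
end

section
/- Let F_full = {f_a : a ∈ {0,1}^ℕ} be the autoregressive class with f_a(x) = a_{|x|+1} if x is a prefix of a, else 0, and let f_a^{e2e,T}(x) denote the final bit after T autoregressive steps starting from x. Then the set {0, 00, ..., 0^T} of size T is shattered by F_full^{e2e,T}: for every labeling y ∈ {0,1}^T of these strings there is a sequence a (beginning with 0^T followed by arbitrary bits) with f_a^{e2e,T}(0^t) = y_t for all 1 ≤ t ≤ T. -/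
/-- One autoregressive step: append the generated bit. -/
def arStep (f : List Bool → Bool) (x : List Bool) : List Bool := x ++ [f x]

/-- The end-to-end output: the last bit after `T` autoregressive steps. -/
def e2e (f : List Bool → Bool) (T : ℕ) (x : List Bool) : Bool :=
  ((arStep f)^[T] x).getLastD false

/-
On a prefix of `a`, the predictor `f_a` outputs the next bit of `a`, so its trajectory stays on
prefixes of `a` and `T` steps from the prefix of length `n + 1` end with the bit `a (n + T)`.
Starting from `0^(t+1)` the end-to-end output is therefore `a (t + T)`, and the labeling is
realized by reading `a` off the list `0^T ++ y`.
-/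

lemma fa_ofFn (a : ℕ → Bool) (n : ℕ) :
    fa a (List.ofFn fun i : Fin n => a i) = a n := by
  rw [fa, if_pos (List.ext_getElem (by simp) (by simp))]
  simp

lemma arStep_fa_ofFn (a : ℕ → Bool) (n : ℕ) :
    arStep (fa a) (List.ofFn fun i : Fin n => a i) = List.ofFn fun i : Fin (n + 1) => a i := by
  rw [arStep, fa_ofFn, List.ofFn_succ']
  simp

lemma iterate_arStep_fa_ofFn (a : ℕ → Bool) (n k : ℕ) :
    (arStep (fa a))^[k] (List.ofFn fun i : Fin n => a i) = List.ofFn fun i : Fin (n + k) => a i := by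
  induction k with
  | zero => rfl
  | succ k ih => rw [Function.iterate_succ_apply', ih, arStep_fa_ofFn, Nat.add_assoc]

lemma e2e_fa_ofFn (a : ℕ → Bool) (n T : ℕ) :
    e2e (fa a) T (List.ofFn fun i : Fin (n + 1) => a i) = a (n + T) := by
  rw [e2e, iterate_arStep_fa_ofFn, Nat.add_right_comm, List.ofFn_succ']
  simp

lemma List.replicate_eq_ofFn_of_forall_lt {α : Type*} {a : ℕ → α} {b : α} {n : ℕ}
    (h : ∀ i < n, a i = b) : List.replicate n b = List.ofFn fun i : Fin n => a i :=
  List.ext_getElem (by simp) fun i hi _ => by simp_all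

theorem stmt_15_general (T : ℕ) (y : Fin T → Bool) :
    ∃ a : ℕ → Bool, (∀ i : ℕ, i < T → a i = false) ∧
      ∀ t : Fin T, e2e (fa a) T (List.replicate (t.val + 1) false) = y t := by
  set a : ℕ → Bool := fun i => (List.replicate T false ++ List.ofFn y).getD i false
  have ha_lt : ∀ i < T, a i = false := fun i hi => by
    simp only [a]
    rw [List.getD_append _ _ _ _ (by simpa using hi)]
    simp [hi]
  have ha_add : ∀ t : Fin T, a (t + T) = y t := fun t => by
    simp only [a]
    rw [List.getD_append_right _ _ _ _ (by simp)]
    simp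
  refine ⟨a, ha_lt, fun t => ?_⟩
  rw [List.replicate_eq_ofFn_of_forall_lt fun i hi => ha_lt i (by omega), e2e_fa_ofFn, ha_add]

/-- The chain `0, 00, …, 0^T` is shattered by `F_full^{e2e,T}`: every labeling
`y : Fin T → Bool` is realized by some `f_a` whose sequence `a` begins with `0^T`. -/
theorem stmt_15 (T : ℕ) (hT : 1 ≤ T) (y : Fin T → Bool) :
    ∃ a : ℕ → Bool, (∀ i : ℕ, i < T → a i = false) ∧
      ∀ t : Fin T, e2e (fa a) T (List.replicate (t.val + 1) false) = y t :=
  stmt_15_general T y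
end

section
/- Let F_full be the autoregressive class indexed by infinite binary sequences as above. If a set S = {x₁ ≺ x₂ ≺ ... ≺ x_m} (a prefix chain) is shattered by F_full^{e2e,T}, then |x_m| − |x₁| < T, and hence m ≤ T; consequently VC(F_full^{e2e,T}) = T for every T ≥ 1. -/
lemma iter_match (a : ℕ → Bool) (n : ℕ) : ∀ T : ℕ,
    (arStep (fa a))^[T] (List.ofFn fun i : Fin n => a i) = List.ofFn fun i : Fin (n + T) => a i := by
  intro T
  induction T with
  | zero => simp
  | succ S ih =>
    rw [Function.iterate_succ_apply', ih, arStep, fa_ofFn]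
    show _ = List.ofFn fun i : Fin ((n + S) + 1) => a i
    rw [List.ofFn_succ' (fun i : Fin ((n + S) + 1) => a i)]
    simp [List.concat_eq_append, Fin.last]

lemma e2e_ofFn (a : ℕ → Bool) (n T : ℕ) (hT : 1 ≤ T) :
    e2e (fa a) T (List.ofFn fun i : Fin n => a i) = a (n + T - 1) := by
  obtain ⟨S, rfl⟩ : ∃ S, T = S + 1 := ⟨T - 1, by omega⟩
  rw [e2e, iter_match]
  rw [show (List.ofFn fun i : Fin (n + (S+1)) => a i) = List.ofFn fun i : Fin ((n + S) + 1) => a i from rfl]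
  rw [List.ofFn_succ' (fun i : Fin ((n + S) + 1) => a i)]
  simp [List.concat_eq_append, Fin.last]


lemma eq_ofFn_iff (a : ℕ → Bool) (x : List Bool) :
    x = (List.ofFn fun i : Fin x.length => a i) ↔ ∀ i, ∀ _ : i < x.length, x.getD i false = a i := by
  constructor
  · intro h i hi
    conv_lhs => rw [h]
    simp [List.getD_eq_getElem?_getD, List.getElem?_ofFn, hi]
  · intro h
    apply List.ext_get (by simp)
    intro i h1 h2
    have := h i h1
    simp [List.getD_eq_getElem?_getD, List.getElem?_eq_getElem, h1] at this ⊢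
    simp [this]

lemma mismatch_step (a : ℕ → Bool) (x : List Bool)
    (hx : x ≠ List.ofFn fun i : Fin x.length => a i) :
    x ++ [false] ≠ List.ofFn fun i : Fin (x ++ [false]).length => a i := by
  intro h
  apply hx
  rw [eq_ofFn_iff] at h ⊢
  intro i hi
  have := h i (by simp; omega)
  rwa [List.getD_append _ _ _ _ hi] at this

lemma e2e_mismatch (a : ℕ → Bool) (T : ℕ) (hT : 1 ≤ T) : ∀ (x : List Bool),
    x ≠ (List.ofFn fun i : Fin x.length => a i) → e2e (fa a) T x = false := by
  obtain ⟨S, rfl⟩ : ∃ S, T = S + 1 := ⟨T - 1, by omega⟩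
  clear hT
  induction S with
  | zero =>
    intro x hx
    have hfx : arStep (fa a) x = x ++ [false] := by
      simp only [arStep, fa, if_neg hx]
    rw [e2e, Function.iterate_one, hfx]
    simp
  | succ S ih =>
    intro x hx
    rw [e2e, Function.iterate_succ_apply]
    have hfx : arStep (fa a) x = x ++ [false] := by
      simp only [arStep, fa, if_neg hx]
    rw [hfx]
    exact ih (x ++ [false]) (mismatch_step a x hx)

lemma match_of_prefix (a : ℕ → Bool) (n : ℕ) (x : List Bool)
    (h : x <+: List.ofFn fun i : Fin n => a i) :
    x = List.ofFn fun i : Fin x.length => a i := by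
  obtain ⟨t, ht⟩ := h
  have hlen : x.length ≤ n := by
    have := congrArg List.length ht; simp at this; omega
  rw [eq_ofFn_iff]
  intro i hi
  have h2 : (List.ofFn fun i : Fin n => a i).getD i false = a i := by
    simp [List.getD_eq_getElem?_getD, List.getElem?_ofFn, show i < n by omega]
  rw [← ht, List.getD_append _ _ _ _ hi] at h2
  exact h2

lemma ofFn_prefix_ofFn (a : ℕ → Bool) (m n : ℕ) (h : m ≤ n) :
    (List.ofFn fun i : Fin m => a i) <+: List.ofFn fun i : Fin n => a i := by
  obtain ⟨k, rfl⟩ : ∃ k, n = m + k := ⟨n - m, by omega⟩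
  rw [List.ofFn_add]
  exact ⟨_, rfl⟩

lemma gap_lt (T : ℕ) (hT : 1 ≤ T) {n : ℕ} (x : Fin n → List Bool)
    (hS : ∀ y : Fin n → Bool, ∃ a : ℕ → Bool, ∀ i, e2e (fa a) T (x i) = y i)
    {i0 i1 : Fin n} (hne : i0 ≠ i1) (hpre : x i0 <+: x i1) :
    (x i1).length - (x i0).length < T := by
  by_contra hc
  push_neg at hc
  have hll : (x i0).length ≤ (x i1).length := hpre.length_le
  set k := (x i0).length + T - 1 with hk
  have hklt : k < (x i1).length := by omega
  obtain ⟨a, ha⟩ := hS (fun j => if j = i1 then true else !((x i1).getD k false))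
  have h1 : e2e (fa a) T (x i1) = true := by simpa using ha i1
  have h0 : e2e (fa a) T (x i0) = !((x i1).getD k false) := by
    have := ha i0; rwa [if_neg hne] at this
  have hm1 : x i1 = List.ofFn fun i : Fin (x i1).length => a i := by
    by_contra hx; rw [e2e_mismatch a T hT _ hx] at h1; simp at h1
  have hm0 : x i0 = List.ofFn fun i : Fin (x i0).length => a i :=
    match_of_prefix a _ _ (by rw [← hm1]; exact hpre)
  have he0 : e2e (fa a) T (x i0) = a ((x i0).length + T - 1) := by
    conv_lhs => rw [hm0]
    rw [e2e_ofFn a _ T hT]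
  have hb : (x i1).getD k false = a k := (eq_ofFn_iff a (x i1)).mp hm1 k hklt
  rw [he0, hb, ← hk] at h0
  simp at h0

lemma card_aux {m lo hi : ℕ} (g : Fin m → ℕ) (hinj : Function.Injective g)
    (h : ∀ i, lo ≤ g i ∧ g i ≤ hi) : m ≤ hi - lo + 1 := by
  have h2 := Finset.card_le_card_of_injOn (s := (Finset.univ : Finset (Fin m))) g
    (fun i _ => Finset.mem_Icc.mpr (h i)) hinj.injOn
  simp [Nat.card_Icc] at h2
  omega

/-- If a strict prefix chain `x₁ ≺ ⋯ ≺ x_m` is shattered by `F_full^{e2e,T}`, then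
`|x_m| − |x₁| < T` and `m ≤ T`; consequently `VC(F_full^{e2e,T}) = T` for `T ≥ 1`. -/
theorem stmt_16 (T : ℕ) (hT : 1 ≤ T) :
    (∀ (m : ℕ) (x : Fin m → List Bool),
      (∀ i j : Fin m, i < j → (x i <+: x j) ∧ x i ≠ x j) →
      (∀ y : Fin m → Bool, ∃ a : ℕ → Bool, ∀ i, e2e (fa a) T (x i) = y i) →
      (∀ h0 : 0 < m,
        (x ⟨m - 1, Nat.sub_lt h0 Nat.one_pos⟩).length - (x ⟨0, h0⟩).length < T) ∧
      m ≤ T) ∧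
    IsGreatest {n : ℕ | ∃ x : Fin n → List Bool, Function.Injective x ∧
      ∀ y : Fin n → Bool, ∃ a : ℕ → Bool, ∀ i, e2e (fa a) T (x i) = y i} T := by
  constructor
  · intro m x hchain hS
    have key : ∀ h0 : 0 < m,
        (x ⟨m - 1, Nat.sub_lt h0 Nat.one_pos⟩).length - (x ⟨0, h0⟩).length < T := by
      intro h0
      by_cases h01 : (⟨m - 1, Nat.sub_lt h0 Nat.one_pos⟩ : Fin m) = ⟨0, h0⟩
      · rw [h01]; omega
      · have hlt : (⟨0, h0⟩ : Fin m) < ⟨m - 1, Nat.sub_lt h0 Nat.one_pos⟩ := by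
          simp only [Fin.lt_def]
          have : m - 1 ≠ 0 := fun h => h01 (Fin.ext h)
          omega
        exact gap_lt T hT x hS (fun h => h01 h.symm) (hchain _ _ hlt).1
    refine ⟨key, ?_⟩
    rcases Nat.eq_zero_or_pos m with rfl | h0
    · omega
    have hle : ∀ i j : Fin m, i ≤ j → (x i).length ≤ (x j).length := by
      intro i j hij
      rcases eq_or_lt_of_le hij with rfl | hlt
      · exact le_rfl
      · exact (hchain i j hlt).1.length_le
    have hginj : Function.Injective fun i => (x i).length := by
      intro i j hij
      by_contra hne
      rcases Ne.lt_or_gt hne with hlt | hlt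
      · exact (hchain i j hlt).2 (List.IsPrefix.eq_of_length (hchain i j hlt).1 hij)
      · exact (hchain j i hlt).2 (List.IsPrefix.eq_of_length (hchain j i hlt).1 hij.symm)
    have hcard := card_aux (lo := (x ⟨0, h0⟩).length)
        (hi := (x ⟨m - 1, Nat.sub_lt h0 Nat.one_pos⟩).length)
        (fun i => (x i).length) hginj
      (fun i => ⟨hle _ i (by simp [Fin.le_def]),
                 hle i _ (by simp [Fin.le_def]; omega)⟩)
    have := key h0
    omega
  · constructor
    · refine ⟨fun i => List.replicate i.val false, ?_, ?_⟩
      · intro i j h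
        have := congrArg List.length h
        simp at this
        exact Fin.ext this
      · intro y
        refine ⟨fun j => if h : T - 1 ≤ j ∧ j - (T - 1) < T then y ⟨j - (T - 1), h.2⟩ else false, ?_⟩
        intro i
        set a : ℕ → Bool :=
          fun j => if h : T - 1 ≤ j ∧ j - (T - 1) < T then y ⟨j - (T - 1), h.2⟩ else false with ha
        have hmatch : List.replicate i.val false
            = List.ofFn fun k : Fin (List.replicate i.val false).length => a k := by
          rw [eq_ofFn_iff]
          intro j hj
          simp only [List.length_replicate] at hj
          have hj2 : j < i.val := hj
          have hiT : i.val < T := i.isLt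
          have hbit : a j = false := by
            rw [ha]; exact dif_neg (by omega)
          rw [List.getD_eq_getElem?_getD]
          simp [List.getElem?_replicate, hj2, hbit]
        show e2e (fa a) T (List.replicate i.val false) = y i
        conv_lhs => rw [hmatch]
        rw [e2e_ofFn a _ T hT]
        simp only [List.length_replicate, ha]
        rw [dif_pos ⟨by omega, by have := i.isLt; omega⟩]
        congr 1
        apply Fin.ext
        simp
        omega
    · rintro n ⟨x, hinj, hS⟩
      rcases Nat.eq_zero_or_pos n with rfl | h0
      · omega
      have hcomp : ∀ i j : Fin n, (x i <+: x j) ∨ (x j <+: x i) := by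
        intro i j
        obtain ⟨a, ha⟩ := hS (fun _ => true)
        have hmi : x i = List.ofFn fun k : Fin (x i).length => a k := by
          by_contra hx
          have := ha i; rw [e2e_mismatch a T hT _ hx] at this; simp at this
        have hmj : x j = List.ofFn fun k : Fin (x j).length => a k := by
          by_contra hx
          have := ha j; rw [e2e_mismatch a T hT _ hx] at this; simp at this
        rcases le_total (x i).length (x j).length with h | h
        · left; rw [hmi]; conv_rhs => rw [hmj]
          exact ofFn_prefix_ofFn a _ _ h
        · right; rw [hmj]; conv_rhs => rw [hmi]
          exact ofFn_prefix_ofFn a _ _ h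
      have hginj : Function.Injective fun i => (x i).length := by
        intro i j hij
        by_contra hne
        apply hne
        apply hinj
        rcases hcomp i j with h | h
        · exact List.IsPrefix.eq_of_length h hij
        · exact (List.IsPrefix.eq_of_length h hij.symm).symm
      obtain ⟨i0, -, hmin⟩ := Finset.exists_min_image Finset.univ (fun i => (x i).length)
        ⟨⟨0, h0⟩, Finset.mem_univ _⟩
      obtain ⟨i1, -, hmax⟩ := Finset.exists_max_image Finset.univ (fun i => (x i).length)
        ⟨⟨0, h0⟩, Finset.mem_univ _⟩
      have hcard := card_aux (lo := (x i0).length) (hi := (x i1).length)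
        (fun i => (x i).length) hginj
        (fun i => ⟨hmin i (Finset.mem_univ _), hmax i (Finset.mem_univ _)⟩)
      by_cases hgap : (x i1).length - (x i0).length + 1 ≤ T
      · omega
      · exfalso
        have hll : (x i0).length ≤ (x i1).length := hmin i1 (Finset.mem_univ _)
        have hne : i0 ≠ i1 := by
          intro h; rw [h] at hgap; omega
        have hpre : x i0 <+: x i1 := by
          rcases hcomp i0 i1 with h | h
          · exact h
          · have := h.length_le
            have hx : x i0 = x i1 := (List.IsPrefix.eq_of_length h (by omega)).symm
            exact absurd (hinj hx) hne
        have := gap_lt T hT x hS hne hpre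
        omega
end

section
/- Let F be a class of binary next-token generators with VC(F) = d and ATdim(F) = a (both finite, a ≥ 1). If a set S of size m is shattered by F^{e2e,T}, then 2^m ≤ (m·T)^{6·a·d}; consequently, for T ≥ 20·a·d, VC(F^{e2e,T}) ≤ 20·a·d·log T. -/
/-- `ι` embeds the perfect binary tree of depth `n` (whose vertices are the binary
strings of length ≤ `n`) as a leveled subtree of the depth-`T` generation tree
(whose vertices are the binary suffix strings of length ≤ `T`). -/
def LeveledEmbedding (n T : ℕ) (ι : List Bool → List Bool) : Prop :=
  (∀ s : List Bool, s.length ≤ n → (ι s).length ≤ T) ∧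
  Set.InjOn ι {s : List Bool | s.length ≤ n} ∧
  (∀ s t : List Bool, s.length ≤ n → t.length ≤ n → ∀ b : Bool,
    ((s ++ [b]) <+: t ↔ (ι s ++ [b]) <+: ι t)) ∧
  (∀ s t : List Bool, s.length ≤ n → t.length ≤ n →
    (s.length = t.length ↔ (ι s).length = (ι t).length))


open Finset

noncomputable section
open scoped Classical

/-- the set of all branches: lists of `Bool` of length `T`. -/
def allB (T : ℕ) : Finset (List Bool) :=
  Finset.image (fun v : Fin T → Bool => List.ofFn v) Finset.univ

lemma mem_allB {T : ℕ} {w : List Bool} : w ∈ allB T ↔ w.length = T := by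
  constructor
  · rintro h
    simp only [allB, Finset.mem_image] at h
    obtain ⟨v, -, rfl⟩ := h
    simp
  · rintro rfl
    simp only [allB, Finset.mem_image]
    exact ⟨w.get ∘ Fin.cast rfl, by simp, by simp [List.ofFn_get]⟩

/-- `LST B t`: B contains a leveled perfect subtree on level list `t`. -/
def LST (B : Finset (List Bool)) (t : List ℕ) : Prop :=
  ∃ w : List Bool → List Bool,
    (∀ ℓ : List Bool, ℓ.length = t.length → w ℓ ∈ B) ∧
    (∀ ℓ : List Bool, ℓ.length = t.length → ∀ j, j < t.length →
        (w ℓ).getD (t.getD j 0) false = ℓ.getD j false) ∧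
    (∀ ℓ ℓ' : List Bool, ℓ.length = t.length → ℓ'.length = t.length → ∀ j, j < t.length →
        ℓ.take j = ℓ'.take j → (w ℓ).take (t.getD j 0) = (w ℓ').take (t.getD j 0))

def shatFam (T : ℕ) (B : Finset (List Bool)) : Finset (Finset ℕ) :=
  (Finset.range T).powerset.filter
    (fun L => ∃ l : List ℕ, l.Pairwise (· < ·) ∧ l.toFinset = L ∧ LST B l)

lemma LST_nil {B : Finset (List Bool)} (h : B.Nonempty) : LST B [] := by
  obtain ⟨w, hw⟩ := h
  exact ⟨fun _ => w, fun _ _ => hw, by simp, by simp⟩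

lemma empty_mem_shatFam {T : ℕ} {B : Finset (List Bool)} (h : B.Nonempty) :
    ∅ ∈ shatFam T B := by
  simp only [shatFam, Finset.mem_filter, Finset.mem_powerset]
  exact ⟨Finset.empty_subset _, [], List.Pairwise.nil, by simp, LST_nil h⟩
end
noncomputable section
open scoped Classical

lemma lst_cons_lift {B' B : Finset (List Bool)} {b : Bool}
    (hsub : ∀ u ∈ B', b :: u ∈ B) {l : List ℕ} (h : LST B' l) :
    LST B (l.map Nat.succ) := by
  obtain ⟨w, hmem, hbit, hagree⟩ := h
  refine ⟨fun ℓ => b :: w ℓ, ?_, ?_, ?_⟩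
  · intro ℓ hℓ
    exact hsub _ (hmem ℓ (by simpa using hℓ))
  · intro ℓ hℓ j hj
    simp only [List.length_map] at hℓ hj
    have : (l.map Nat.succ).getD j 0 = (l.getD j 0) + 1 := by
      rw [List.getD_eq_getElem _ _ (by simpa using hj), List.getD_eq_getElem _ _ hj]
      simp
    rw [this, List.getD_cons_succ]
    exact hbit ℓ hℓ j hj
  · intro ℓ ℓ' hℓ hℓ' j hj htake
    simp only [List.length_map] at hℓ hℓ' hj
    have : (l.map Nat.succ).getD j 0 = (l.getD j 0) + 1 := by
      rw [List.getD_eq_getElem _ _ (by simpa using hj), List.getD_eq_getElem _ _ hj]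
      simp
    rw [this, List.take_succ_cons, List.take_succ_cons]
    rw [hagree ℓ ℓ' hℓ hℓ' j hj htake]

lemma lst_combine {B B0 B1 : Finset (List Bool)}
    (h0sub : ∀ u ∈ B0, (false :: u) ∈ B) (h1sub : ∀ u ∈ B1, (true :: u) ∈ B)
    {l : List ℕ} (h0 : LST B0 l) (h1 : LST B1 l) :
    LST B (0 :: l.map Nat.succ) := by
  classical
  obtain ⟨w0, hmem0, hbit0, hagree0⟩ := h0
  obtain ⟨w1, hmem1, hbit1, hagree1⟩ := h1
  have hget : ∀ j, j < l.length → (l.map Nat.succ).getD j 0 = (l.getD j 0) + 1 := by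
    intro j hj
    rw [List.getD_eq_getElem _ _ (by simpa using hj), List.getD_eq_getElem _ _ hj]
    simp
  refine ⟨fun ℓ => match ℓ with
    | [] => []
    | (b :: ℓ') => b :: (bif b then w1 ℓ' else w0 ℓ'), ?_, ?_, ?_⟩
  · rintro (_ | ⟨b, ℓ'⟩) hℓ
    · simp at hℓ
    · simp only [List.length_cons, List.length_map] at hℓ
      cases b
      · simpa using h0sub _ (hmem0 ℓ' (by omega))
      · simpa using h1sub _ (hmem1 ℓ' (by omega))
  · rintro (_ | ⟨b, ℓ'⟩) hℓ j hj
    · simp at hℓ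
    · simp only [List.length_cons, List.length_map] at hℓ hj
      match j with
      | 0 => cases b <;> simp
      | (j' + 1) =>
        have hj' : j' < l.length := by omega
        rw [List.getD_cons_succ, List.getD_cons_succ, hget j' hj', List.getD_cons_succ]
        cases b
        · simpa using hbit0 ℓ' (by omega) j' hj'
        · simpa using hbit1 ℓ' (by omega) j' hj'
  · rintro (_ | ⟨b, ℓ'⟩) (_ | ⟨c, m'⟩) hℓ hm j hj htake
    · simp at hℓ
    · simp at hℓ
    · simp at hm
    · simp only [List.length_cons, List.length_map] at hℓ hm hj
      match j with
      | 0 => simp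
      | (j' + 1) =>
        have hj' : j' < l.length := by omega
        rw [List.take_succ_cons, List.take_succ_cons] at htake
        rw [List.cons.injEq] at htake
        obtain ⟨rfl, htk⟩ := htake
        rw [List.getD_cons_succ, hget j' hj', List.take_succ_cons, List.take_succ_cons]
        cases b
        · simp only [Bool.cond_false]
          rw [hagree0 ℓ' m' (by omega) (by omega) j' hj' htk]
        · simp only [Bool.cond_true]
          rw [hagree1 ℓ' m' (by omega) (by omega) j' hj' htk]
end
noncomputable section
open scoped Classical

lemma sorted_map_succ {l : List ℕ} (h : l.Pairwise (· < ·)) :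
    (l.map Nat.succ).Pairwise (· < ·) :=
  List.Pairwise.map _ (fun {a b} (hab : a < b) => Nat.succ_lt_succ hab) h

lemma mem_shatFam_iff {T : ℕ} {B : Finset (List Bool)} {L : Finset ℕ} :
    L ∈ shatFam T B ↔ L ⊆ Finset.range T ∧
      ∃ l : List ℕ, l.Pairwise (· < ·) ∧ l.toFinset = L ∧ LST B l := by
  simp [shatFam]

lemma shift_mem_shatFam {T : ℕ} {B' B : Finset (List Bool)} {b : Bool}
    (hsub : ∀ u ∈ B', b :: u ∈ B) {L : Finset ℕ} (hL : L ∈ shatFam T B') :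
    L.image Nat.succ ∈ shatFam (T + 1) B := by
  rw [mem_shatFam_iff] at hL ⊢
  obtain ⟨hrange, l, hsort, htf, hlst⟩ := hL
  have htfmap : (l.map Nat.succ).toFinset = L.image Nat.succ := by
    ext z; simp [← htf]
  refine ⟨?_, l.map Nat.succ, sorted_map_succ hsort, htfmap, lst_cons_lift hsub hlst⟩
  intro z hz
  simp only [Finset.mem_image] at hz
  obtain ⟨y, hy, rfl⟩ := hz
  have := hrange hy
  simp only [Finset.mem_range] at this ⊢
  omega

lemma combine_mem_shatFam {T : ℕ} {B B0 B1 : Finset (List Bool)}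
    (h0sub : ∀ u ∈ B0, (false :: u) ∈ B) (h1sub : ∀ u ∈ B1, (true :: u) ∈ B)
    {L : Finset ℕ} (hL0 : L ∈ shatFam T B0) (hL1 : L ∈ shatFam T B1) :
    insert 0 (L.image Nat.succ) ∈ shatFam (T + 1) B := by
  rw [mem_shatFam_iff] at hL0 hL1 ⊢
  obtain ⟨hrange, l0, hsort0, htf0, hlst0⟩ := hL0
  obtain ⟨-, l1, hsort1, htf1, hlst1⟩ := hL1
  -- l0 = l1
  have hperm : l0.Perm l1 := by
    apply List.perm_of_nodup_nodup_toFinset_eq hsort0.nodup hsort1.nodup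
    rw [htf0, htf1]
  have heq : l0 = l1 := List.Perm.eq_of_pairwise (fun a b _ _ h1 h2 => absurd (h1.trans h2) (lt_irrefl _)) hsort0 hsort1 hperm
  subst heq
  refine ⟨?_, 0 :: l0.map Nat.succ, ?_, ?_, lst_combine h0sub h1sub hlst0 hlst1⟩
  · intro z hz
    simp only [Finset.mem_insert, Finset.mem_image] at hz
    rcases hz with rfl | ⟨y, hy, rfl⟩
    · simp
    · have := hrange hy
      simp only [Finset.mem_range] at this ⊢
      omega
  · refine List.Pairwise.cons ?_ (sorted_map_succ hsort0)
    intro z hz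
    simp only [List.mem_map] at hz
    obtain ⟨y, -, rfl⟩ := hz
    omega
  · ext z; simp [← htf0]

theorem card_le_card_shatFam : ∀ (T : ℕ) (B : Finset (List Bool)),
    (∀ w ∈ B, w.length = T) → B.card ≤ (shatFam T B).card := by
  intro T
  induction T with
  | zero =>
    intro B hlen
    rcases B.eq_empty_or_nonempty with rfl | hne
    · simp
    · have h1 : B ⊆ {[]} := by
        intro w hw
        have := hlen w hw
        simp only [Finset.mem_singleton]
        exact List.eq_nil_of_length_eq_zero this
      calc B.card ≤ 1 := by simpa using Finset.card_le_card h1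
        _ ≤ (shatFam 0 B).card :=
          Finset.card_pos.mpr ⟨∅, empty_mem_shatFam hne⟩
  | succ T ih =>
    intro B hlen
    set B0 : Finset (List Bool) := (allB T).filter (fun u => (false :: u) ∈ B) with hB0
    set B1 : Finset (List Bool) := (allB T).filter (fun u => (true :: u) ∈ B) with hB1
    have h0sub : ∀ u ∈ B0, (false :: u) ∈ B := fun u hu => (Finset.mem_filter.mp hu).2
    have h1sub : ∀ u ∈ B1, (true :: u) ∈ B := fun u hu => (Finset.mem_filter.mp hu).2
    have h0len : ∀ w ∈ B0, w.length = T := fun w hw => mem_allB.mp (Finset.mem_filter.mp hw).1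
    have h1len : ∀ w ∈ B1, w.length = T := fun w hw => mem_allB.mp (Finset.mem_filter.mp hw).1
    -- card split
    have hsplit : B.card = B0.card + B1.card := by
      have himg : B = (B0.image (false :: ·)) ∪ (B1.image (true :: ·)) := by
        ext w
        simp only [Finset.mem_union, Finset.mem_image, hB0, hB1, Finset.mem_filter, mem_allB]
        constructor
        · intro hw
          have hlw := hlen w hw
          match w with
          | b :: u =>
            simp only [List.length_cons] at hlw
            cases b
            · exact Or.inl ⟨u, ⟨⟨by omega, hw⟩, rfl⟩⟩
            · exact Or.inr ⟨u, ⟨⟨by omega, hw⟩, rfl⟩⟩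
        · rintro (⟨u, ⟨⟨-, hu⟩, rfl⟩⟩ | ⟨u, ⟨⟨-, hu⟩, rfl⟩⟩) <;> exact hu
      rw [himg, Finset.card_union_of_disjoint, Finset.card_image_of_injective _ (fun x y h => by
          simpa using h), Finset.card_image_of_injective _ (fun x y h => by simpa using h)]
      · rw [Finset.disjoint_left]
        rintro w hw hw'
        simp only [Finset.mem_image] at hw hw'
        obtain ⟨u, -, rfl⟩ := hw
        obtain ⟨v, -, h⟩ := hw'
        simp at h
    -- the two injections into shatFam (T+1) B
    set S := shatFam (T + 1) B with hS
    set S0 := shatFam T B0 with hS0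
    set S1 := shatFam T B1 with hS1
    set X := (S0 ∪ S1).image (fun L => L.image Nat.succ) with hX
    set Y := (S0 ∩ S1).image (fun L => insert 0 (L.image Nat.succ)) with hY
    have hXS : X ⊆ S := by
      intro z hz
      simp only [hX, Finset.mem_image, Finset.mem_union] at hz
      obtain ⟨L, hL | hL, rfl⟩ := hz
      · exact shift_mem_shatFam h0sub hL
      · exact shift_mem_shatFam h1sub hL
    have hYS : Y ⊆ S := by
      intro z hz
      simp only [hY, Finset.mem_image, Finset.mem_inter] at hz
      obtain ⟨L, ⟨hL0, hL1⟩, rfl⟩ := hz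
      exact combine_mem_shatFam h0sub h1sub hL0 hL1
    have hzero : ∀ L : Finset ℕ, (0 : ℕ) ∉ L.image Nat.succ := by
      intro L h
      simp only [Finset.mem_image] at h
      obtain ⟨y, -, h⟩ := h
      exact Nat.succ_ne_zero y h
    have hXY : Disjoint X Y := by
      rw [Finset.disjoint_left]
      intro z hz hz'
      simp only [hX, hY, Finset.mem_image] at hz hz'
      obtain ⟨L, -, rfl⟩ := hz
      obtain ⟨L', -, h⟩ := hz'
      exact hzero L (h ▸ Finset.mem_insert_self 0 _)
    have hinj : Function.Injective (fun L : Finset ℕ => L.image Nat.succ) :=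
      Finset.image_injective Nat.succ_injective
    have hcardX : X.card = (S0 ∪ S1).card := Finset.card_image_of_injective _ hinj
    have hcardY : Y.card = (S0 ∩ S1).card := by
      apply Finset.card_image_of_injOn
      intro L hL L' hL' h
      simp only at h
      have : L.image Nat.succ = L'.image Nat.succ := by
        have h0 : (0:ℕ) ∉ L.image Nat.succ := hzero L
        have h0' : (0:ℕ) ∉ L'.image Nat.succ := hzero L'
        rw [← Finset.erase_insert h0, ← Finset.erase_insert h0', h]
      exact hinj this
    calc B.card = B0.card + B1.card := hsplit
      _ ≤ S0.card + S1.card := Nat.add_le_add (ih B0 h0len) (ih B1 h1len)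
      _ = (S0 ∪ S1).card + (S0 ∩ S1).card := (Finset.card_union_add_card_inter S0 S1).symm
      _ = X.card + Y.card := by rw [hcardX, hcardY]
      _ = (X ∪ Y).card := (Finset.card_union_of_disjoint hXY).symm
      _ ≤ S.card := Finset.card_le_card (Finset.union_subset hXS hYS)
end
noncomputable section
open scoped Classical

lemma sum_choose_le_pow (T : ℕ) : ∀ a : ℕ, ∑ j ∈ Finset.range (a + 1), T.choose j ≤ (T + 1) ^ a := by
  intro a
  induction a with
  | zero => simp
  | succ a ih =>
    rw [Finset.sum_range_succ]
    have h1 : T.choose (a + 1) ≤ T ^ (a + 1) := Nat.choose_le_pow T (a + 1)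
    have h2 : T ^ (a + 1) ≤ T * (T + 1) ^ a := by
      rw [pow_succ, mul_comm]
      exact Nat.mul_le_mul_left T (Nat.pow_le_pow_left (Nat.le_succ T) a)
    have h3 : (T + 1) ^ (a + 1) = (T + 1) ^ a + T * (T + 1) ^ a := by ring
    omega

lemma card_shatFam_le {T a : ℕ} {B : Finset (List Bool)}
    (h : ∀ L ∈ shatFam T B, L.card ≤ a) :
    (shatFam T B).card ≤ (T + 1) ^ a := by
  have hsub : shatFam T B ⊆ (Finset.range (a + 1)).biUnion
      (fun j => Finset.powersetCard j (Finset.range T)) := by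
    intro L hL
    have h1 : L ⊆ Finset.range T := (mem_shatFam_iff.mp hL).1
    have h2 : L.card ≤ a := h L hL
    simp only [Finset.mem_biUnion, Finset.mem_range, Finset.mem_powersetCard]
    exact ⟨L.card, by omega, h1, rfl⟩
  calc (shatFam T B).card ≤ _ := Finset.card_le_card hsub
    _ ≤ ∑ j ∈ Finset.range (a + 1), (Finset.powersetCard j (Finset.range T)).card :=
        Finset.card_biUnion_le
    _ = ∑ j ∈ Finset.range (a + 1), T.choose j := by
        apply Finset.sum_congr rfl
        intro j _
        rw [Finset.card_powersetCard, Finset.card_range]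
    _ ≤ (T + 1) ^ a := sum_choose_le_pow T a

/-- the set of branches of length `T` realized by `F` from prompt `p`. -/
def branches (F : Set (List Bool → Bool)) (p : List Bool) (T : ℕ) : Finset (List Bool) :=
  (allB T).filter (fun w => ∃ f ∈ F, ∀ i, i < T → f (p ++ w.take i) = w.getD i false)

lemma mem_branches {F : Set (List Bool → Bool)} {p : List Bool} {T : ℕ} {w : List Bool} :
    w ∈ branches F p T ↔ w.length = T ∧ ∃ f ∈ F, ∀ i, i < T → f (p ++ w.take i) = w.getD i false := by
  simp [branches, mem_allB]
end


noncomputable section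
open scoped Classical

lemma shatFam_to_embedding
    {F : Set (List Bool → Bool)} {p : List Bool} {T : ℕ} {L : Finset ℕ}
    (hL : L ∈ shatFam T (branches F p T)) :
    ∃ (x : List Bool) (T' : ℕ) (ι : List Bool → List Bool),
      LeveledEmbedding L.card T' ι ∧
      ∀ ℓ : List Bool, ℓ.length = L.card → ∃ f ∈ F,
        ∀ i : ℕ, i < L.card → f (x ++ ι (ℓ.take i)) = ℓ.getD i false := by
  obtain ⟨hrange, l, hsort, htf, hlst⟩ := mem_shatFam_iff.mp hL
  obtain ⟨w, hmem, hbit, hagree⟩ := hlst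
  set k := l.length with hk
  have hcard : L.card = k := by rw [← htf, List.toFinset_card_of_nodup hsort.nodup]
  rw [hcard]
  -- basic facts about levels
  have hlt : ∀ j, j < k → l.getD j 0 < T := by
    intro j hj
    have hmem' : l.getD j 0 ∈ l := by
      rw [List.getD_eq_getElem _ _ hj]; exact List.getElem_mem _
    have : l.getD j 0 ∈ L := htf ▸ List.mem_toFinset.mpr hmem'
    simpa using hrange this
  set lev : ℕ → ℕ := fun j => (l ++ [T]).getD j 0 with hlev
  have hlen' : (l ++ [T]).length = k + 1 := by simp [hk]
  have hlev_lt : ∀ j, j < k → lev j = l.getD j 0 := fun j hj => List.getD_append _ _ _ j hj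
  have hlevk : lev k = T := by
    show (l ++ [T]).getD k 0 = T
    rw [List.getD_eq_getElem _ _ (by omega)]
    rw [List.getElem_append_right (le_refl k)]
    simp
  have hlevle : ∀ j, j ≤ k → lev j ≤ T := by
    intro j hj
    rcases eq_or_lt_of_le hj with rfl | h
    · exact hlevk.le
    · exact le_of_lt (hlev_lt j h ▸ hlt j h)
  have hsort' : (l ++ [T]).Pairwise (· < ·) := by
    rw [List.pairwise_append]
    refine ⟨hsort, List.pairwise_singleton _ _, fun x hx y hy => ?_⟩
    simp only [List.mem_singleton] at hy
    subst hy
    obtain ⟨j, hj, rfl⟩ := List.mem_iff_getElem.mp hx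
    have := hlt j hj
    rwa [List.getD_eq_getElem _ _ hj] at this
  have hmono : ∀ i j, i < j → j ≤ k → lev i < lev j := by
    intro i j hij hjk
    have h1 : i < (l ++ [T]).length := by omega
    have h2 : j < (l ++ [T]).length := by omega
    have h3 := (List.sortedLT_iff_pairwise.mpr hsort').strictMono_get (show (⟨i, h1⟩ : Fin _) < ⟨j, h2⟩ from hij)
    simp only [List.get_eq_getElem] at h3
    show (l ++ [T]).getD i 0 < (l ++ [T]).getD j 0
    rwa [List.getD_eq_getElem _ _ h1, List.getD_eq_getElem _ _ h2]
  have hmono_rev : ∀ i j, i ≤ k → j ≤ k → lev i < lev j → i < j := by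
    intro i j hik hjk h
    by_contra hc
    push_neg at hc
    rcases eq_or_lt_of_le hc with rfl | h'
    · omega
    · exact absurd (hmono j i h' hik) (by omega)
  have hlevinj : ∀ i j, i ≤ k → j ≤ k → lev i = lev j → i = j := by
    intro i j hik hjk h
    by_contra hc
    rcases Nat.lt_or_ge i j with h' | h'
    · exact absurd (hmono i j h' hjk) (by omega)
    · rcases eq_or_lt_of_le h' with rfl | h'' 
      · omega
      · exact absurd (hmono j i h'' hik) (by omega)
  -- padding and the embedding
  set pad : List Bool → List Bool := fun s => s ++ List.replicate (k - s.length) false with hpad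
  have hpadlen : ∀ s : List Bool, s.length ≤ k → (pad s).length = k := by
    intro s hs; simp only [hpad, List.length_append, List.length_replicate]; omega
  have hpadtake : ∀ s : List Bool, (pad s).take s.length = s := fun s => List.take_left
  have hpadself : ∀ ℓ : List Bool, ℓ.length = k → pad ℓ = ℓ := by
    intro ℓ hℓ; simp [hpad, hℓ]
  have hwlen : ∀ ℓ : List Bool, ℓ.length = k → (w ℓ).length = T := by
    intro ℓ hℓ
    exact (mem_branches.mp (hmem ℓ hℓ)).1
  set ι : List Bool → List Bool := fun s => (w (pad s)).take (lev s.length) with hι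
  have hιlen : ∀ s : List Bool, s.length ≤ k → (ι s).length = lev s.length := by
    intro s hs
    simp only [hι, List.length_take, hwlen (pad s) (hpadlen s hs)]
    exact min_eq_left (hlevle _ hs)
  -- F2
  have hkey : ∀ s t : List Bool, s.length ≤ t.length → t.length ≤ k → t.take s.length = s →
      ι s = (w (pad t)).take (lev s.length) := by
    intro s t hst htk htake
    by_cases hsk : s.length = k
    · have htlen : t.length = k := le_antisymm htk (hsk ▸ hst)
      have hts : t = s := by
        rw [← htake, hsk, ← htlen, List.take_length]
      rw [hts]
    · have hsk' : s.length < k := lt_of_le_of_ne (hst.trans htk) hsk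
      have heq1 : (pad s).take s.length = (pad t).take s.length := by
        rw [hpadtake s, hpad]
        simp only
        rw [List.take_append_of_le_length hst, htake]
      have := hagree (pad s) (pad t) (hpadlen s (hst.trans htk)) (hpadlen t htk)
        s.length hsk' heq1
      rw [hι]
      simp only
      rw [hlev_lt s.length hsk']
      exact this
  -- F3
  have hbit' : ∀ t : List Bool, t.length ≤ k → ∀ j, j < t.length →
      (w (pad t)).getD (lev j) false = t.getD j false := by
    intro t htk j hj
    rw [hlev_lt j (lt_of_lt_of_le hj htk)]
    rw [hbit (pad t) (hpadlen t htk) j (lt_of_lt_of_le hj htk)]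
    exact List.getD_append _ _ _ j hj
  -- getD of take helper
  have getD_take' : ∀ (x : List Bool) (n m : ℕ), n < m → n < x.length →
      (x.take m).getD n false = x.getD n false := by
    intro x n m h1 h2
    rw [List.getD_eq_getElem _ _ (by simp only [List.length_take]; omega),
      List.getElem_take, ← List.getD_eq_getElem]
  -- bit of ι at lev j
  have hιbit : ∀ s : List Bool, s.length ≤ k → ∀ j, j < s.length →
      (ι s).getD (lev j) false = s.getD j false := by
    intro s hs j hj
    have h1 : lev j < lev s.length := hmono j s.length hj hs
    have h2 : lev j < (w (pad s)).length := by
      rw [hwlen _ (hpadlen s hs)]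
      have := hlevle _ hs
      omega
    show ((w (pad s)).take (lev s.length)).getD (lev j) false = _
    rw [getD_take' _ _ _ h1 h2]
    exact hbit' s hs j hj
  -- injectivity at equal lengths
  have hinj2 : ∀ s t : List Bool, s.length = t.length → t.length ≤ k → ι s = ι t → s = t := by
    intro s t hst htk hιeq
    by_contra hne
    have hex : ∃ j, j < s.length ∧ s.getD j false ≠ t.getD j false := by
      by_contra hc
      push_neg at hc
      exact hne (List.ext_getElem hst (fun n h1 h2 => by
        have := hc n h1
        rwa [List.getD_eq_getElem _ _ h1, List.getD_eq_getElem _ _ h2] at this))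
    obtain ⟨j, hj, hbitne⟩ := hex
    apply hbitne
    rw [← hιbit s (hst ▸ htk) j hj, ← hιbit t htk j (hst ▸ hj), hιeq]
  refine ⟨p, T, ι, ⟨?_, ?_, ?_, ?_⟩, ?_⟩
  · -- lengths
    intro s hs
    rw [hιlen s hs]
    exact hlevle _ hs
  · -- injectivity
    intro s hs t ht h
    simp only [Set.mem_setOf_eq] at hs ht
    have hle : (ι s).length = (ι t).length := by rw [h]
    rw [hιlen s hs, hιlen t ht] at hle
    exact hinj2 s t (hlevinj _ _ hs ht hle) ht h
  · -- prefix iff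
    intro s t hs ht b
    constructor
    · intro hpre
      have hlen1 : s.length + 1 ≤ t.length := by
        have := hpre.length_le; simpa using this
      have hts : t.take s.length = s :=
        (List.prefix_iff_eq_take.mp ((List.prefix_append s [b]).trans hpre)).symm
      have htb : t.getD s.length false = b := by
        have hpt := List.prefix_iff_eq_take.mp hpre
        have hlen2 : (s ++ [b]).length = s.length + 1 := by simp
        rw [hlen2] at hpt
        have e : (s ++ [b]).getD s.length false = b := by
          rw [List.getD_eq_getElem _ _ (by simp)]
          rw [List.getElem_append_right (le_refl _)]
          simp
        rw [← getD_take' t s.length (s.length + 1) (by omega) (by omega), ← hpt]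
        exact e
      have hkey_t := hkey s t (by omega) ht hts
      have hslt : s.length < t.length := by omega
      have hlevlt : lev s.length < lev t.length := hmono _ _ hslt ht
      have hlevT : lev t.length ≤ T := hlevle _ ht
      have hlt2 : lev s.length < (w (pad t)).length := by
        rw [hwlen _ (hpadlen t ht)]; omega
      have hwbit : (w (pad t)).getD (lev s.length) false = b := by
        rw [hbit' t ht s.length hslt]; exact htb
      have e2 : (w (pad t)).take (lev s.length + 1) = (w (pad t)).take (lev s.length) ++ [b] := by
        rw [List.take_succ, List.getElem?_eq_getElem hlt2]
        have : (w (pad t))[lev s.length] = b := by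
          rw [← List.getD_eq_getElem _ false hlt2]; exact hwbit
        rw [this]
        rfl
      rw [hkey_t, ← e2]
      exact List.take_prefix_take_left (by omega)
    · intro hpre
      have hl1 : (ι s).length = lev s.length := hιlen s hs
      have hl2 : (ι t).length = lev t.length := hιlen t ht
      have hlen1 : lev s.length + 1 ≤ lev t.length := by
        have := hpre.length_le
        simp only [List.length_append, List.length_cons, List.length_nil, hl1, hl2] at this
        omega
      have hslt : s.length < t.length := hmono_rev _ _ hs ht (by omega)
      set u := t.take s.length with hu
      have hulen : u.length = s.length := by simp [hu]; omega
      have hui : ι u = (w (pad t)).take (lev s.length) := by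
        have := hkey u t (by omega) ht (by rw [hulen])
        rwa [hulen] at this
      have hιspre : ι s <+: ι t := (List.prefix_append _ _).trans hpre
      have hιs_take : ι s = (ι t).take (lev s.length) := by
        have := List.prefix_iff_eq_take.mp hιspre
        rwa [hl1] at this
      have hιt_take : (ι t).take (lev s.length) = (w (pad t)).take (lev s.length) := by
        show ((w (pad t)).take (lev t.length)).take (lev s.length) = _
        rw [List.take_take]
        congr 1
        omega
      have hsu : s = u := by
        refine hinj2 s u (by omega) (by omega) ?_
        rw [hιs_take, hιt_take, hui]
      have hb1 : (ι t).getD (lev s.length) false = b := by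
        have hpt := List.prefix_iff_eq_take.mp hpre
        have hlen3 : (ι s ++ [b]).length = lev s.length + 1 := by simp [hl1]
        rw [hlen3] at hpt
        have e : (ι s ++ [b]).getD (lev s.length) false = b := by
          rw [← hl1, List.getD_eq_getElem _ _ (by simp)]
          rw [List.getElem_append_right (le_refl _)]
          simp
        rw [← getD_take' (ι t) (lev s.length) (lev s.length + 1) (by omega) (by omega), ← hpt]
        exact e
      have hb2 : (ι t).getD (lev s.length) false = (w (pad t)).getD (lev s.length) false := by
        show ((w (pad t)).take (lev t.length)).getD (lev s.length) false = _
        refine getD_take' _ _ _ (by omega) ?_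
        rw [hwlen _ (hpadlen t ht)]
        have := hlevle _ ht
        omega
      have hbval : t.getD s.length false = b := by
        rw [← hbit' t ht s.length hslt, ← hb2, hb1]
      have htake1 : t.take (s.length + 1) = s ++ [b] := by
        rw [List.take_succ, List.getElem?_eq_getElem (by omega : s.length < t.length)]
        have : t[s.length] = b := by
          rw [← List.getD_eq_getElem _ false (by omega)]; exact hbval
        rw [this, ← hu, ← hsu]
        rfl
      rw [← htake1]
      exact List.take_prefix _ _
  · -- length iff
    intro s t hs ht
    constructor
    · intro h
      rw [hιlen s hs, hιlen t ht, h]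
    · intro h
      rw [hιlen s hs, hιlen t ht] at h
      exact hlevinj _ _ hs ht h
  · -- realizing functions
    intro ℓ hℓ
    obtain ⟨-, f, hf, hfr⟩ := mem_branches.mp (hmem ℓ hℓ)
    refine ⟨f, hf, fun i hik => ?_⟩
    have hlt : (ℓ.take i).length = i := by
      simp only [List.length_take]; omega
    have htake : ι (ℓ.take i) = (w ℓ).take (lev i) := by
      have h := hkey (ℓ.take i) ℓ (by omega) (le_of_eq hℓ) (by rw [hlt])
      rw [hlt] at h
      rw [h, hpadself ℓ hℓ]
    have hlevi : lev i < T := by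
      have := hmono i k hik (le_refl k)
      omega
    rw [htake, hfr (lev i) hlevi]
    have hb := hbit' ℓ (le_of_eq hℓ) i (hℓ ▸ hik)
    rwa [hpadself ℓ hℓ] at hb
end


lemma getD_take' (x : List Bool) (n m : ℕ) (h1 : n < m) (h2 : n < x.length) :
    (x.take m).getD n false = x.getD n false := by
  rw [List.getD_eq_getElem _ _ (by simp only [List.length_take]; omega),
    List.getElem_take, ← List.getD_eq_getElem]

lemma getD_append_last (u : List Bool) (v : Bool) (d : Bool) :
    (u ++ [v]).getD u.length d = v := by
  rw [List.getD_eq_getElem _ _ (by simp)]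
  rw [List.getElem_append_right (le_refl _)]
  simp

/-- the branch generated by `f` from prompt `x` in `t` steps. -/
def branchOf (f : List Bool → Bool) (x : List Bool) : ℕ → List Bool
  | 0 => []
  | (t + 1) => branchOf f x t ++ [f (x ++ branchOf f x t)]

lemma branchOf_length (f : List Bool → Bool) (x : List Bool) (t : ℕ) :
    (branchOf f x t).length = t := by
  induction t with
  | zero => rfl
  | succ t ih => simp [branchOf, ih]

lemma iterate_arStep (f : List Bool → Bool) (x : List Bool) (t : ℕ) :
    (arStep f)^[t] x = x ++ branchOf f x t := by
  induction t with
  | zero => simp [branchOf]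
  | succ t ih =>
    rw [Function.iterate_succ_apply', ih]
    simp [arStep, branchOf]

lemma branchOf_take (f : List Bool → Bool) (x : List Bool) {i t : ℕ} (h : i ≤ t) :
    (branchOf f x t).take i = branchOf f x i := by
  induction t with
  | zero =>
    have : i = 0 := by omega
    subst this
    simp [branchOf]
  | succ t ih =>
    rcases Nat.lt_or_ge i (t + 1) with h' | h'
    · rw [branchOf, List.take_append_of_le_length (by rw [branchOf_length]; omega)]
      exact ih (by omega)
    · have : i = t + 1 := by omega
      subst this
      exact List.take_of_length_le (by rw [branchOf_length])

lemma branchOf_getD (f : List Bool → Bool) (x : List Bool) {i t : ℕ} (h : i < t) :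
    (branchOf f x t).getD i false = f (x ++ branchOf f x i) := by
  have h1 : (branchOf f x t).getD i false = ((branchOf f x t).take (i + 1)).getD i false := by
    rw [getD_take' _ _ _ (by omega) (by rw [branchOf_length]; omega)]
  rw [h1, branchOf_take f x (by omega : i + 1 ≤ t), branchOf]
  have := getD_append_last (branchOf f x i) (f (x ++ branchOf f x i)) false
  rwa [branchOf_length] at this

lemma branchOf_mem_branches {F : Set (List Bool → Bool)} {f : List Bool → Bool}
    (hf : f ∈ F) (x : List Bool) (T : ℕ) : branchOf f x T ∈ branches F x T := by
  refine mem_branches.mpr ⟨branchOf_length f x T, f, hf, fun i hi => ?_⟩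
  rw [branchOf_take f x hi.le, branchOf_getD f x hi]

lemma e2e_eq_getLastD (f : List Bool → Bool) (x : List Bool) {T : ℕ} (hT : 1 ≤ T) :
    e2e f T x = (branchOf f x T).getLastD false := by
  rw [e2e, iterate_arStep]
  have hne : branchOf f x T ≠ [] := by
    intro h
    have := branchOf_length f x T
    rw [h] at this
    simp at this
    omega
  rw [List.getLastD_eq_getLast?, List.getLastD_eq_getLast?, List.getLast?_append_of_ne_nil _ hne]

lemma branchOf_congr {f f' : List Bool → Bool} {x : List Bool} {T : ℕ}
    (h : ∀ t, t < T → f (x ++ branchOf f x t) = f' (x ++ branchOf f x t)) :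
    ∀ t, t ≤ T → branchOf f x t = branchOf f' x t := by
  intro t ht
  induction t with
  | zero => rfl
  | succ t ih =>
    have he := ih (by omega)
    rw [branchOf, branchOf, ← he, h t (by omega)]


noncomputable section
open scoped Classical

lemma bool_eq_of_iff {a b : Bool} (h : (a = true) ↔ (b = true)) : a = b := by
  cases a <;> cases b <;> simp_all

lemma branches_card_le {F : Set (List Bool → Bool)} {a : ℕ} (p : List Bool) (T : ℕ)
    (hATub : ∀ n : ℕ, (∃ (x : List Bool) (T' : ℕ) (ι : List Bool → List Bool),
      LeveledEmbedding n T' ι ∧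
      ∀ ℓ : List Bool, ℓ.length = n → ∃ f ∈ F,
        ∀ i : ℕ, i < n → f (x ++ ι (ℓ.take i)) = ℓ.getD i false) → n ≤ a) :
    (branches F p T).card ≤ (T + 1) ^ a := by
  refine le_trans (card_le_card_shatFam T (branches F p T)
    (fun w hw => (mem_branches.mp hw).1)) (card_shatFam_le ?_)
  intro L hL
  exact hATub L.card (shatFam_to_embedding hL)

lemma main_count {F : Set (List Bool → Bool)} {a d T m : ℕ} (x : Fin m → List Bool)
    (hVCub : ∀ n : ℕ, (∃ x' : Fin n → List Bool, Function.Injective x' ∧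
      ∀ g : Fin n → Bool, ∃ f ∈ F, ∀ i, f (x' i) = g i) → n ≤ d)
    (hATub : ∀ n : ℕ, (∃ (x : List Bool) (T' : ℕ) (ι : List Bool → List Bool),
      LeveledEmbedding n T' ι ∧
      ∀ ℓ : List Bool, ℓ.length = n → ∃ f ∈ F,
        ∀ i : ℕ, i < n → f (x ++ ι (ℓ.take i)) = ℓ.getD i false) → n ≤ a)
    (hT : 1 ≤ T)
    (hshat : ∀ g : Fin m → Bool, ∃ f ∈ F, ∀ i, e2e f T (x i) = g i) :
    2 ^ m ≤ (m * (T + 1) ^ (a + 1) + 1) ^ d := by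
  classical
  have hchoice : ∀ g : Fin m → Bool, ∃ f : List Bool → Bool,
      f ∈ F ∧ ∀ i, e2e f T (x i) = g i := by
    intro g
    obtain ⟨f, hf, hfv⟩ := hshat g
    exact ⟨f, hf, hfv⟩
  choose φ hφF hφval using hchoice
  set nodes : Finset (List Bool) := Finset.univ.biUnion (fun i : Fin m =>
    (branches F (x i) T).biUnion (fun w =>
      (Finset.range (T + 1)).image (fun t => x i ++ w.take t))) with hnodes
  have hnodecard : nodes.card ≤ m * (T + 1) ^ (a + 1) := by
    refine le_trans Finset.card_biUnion_le ?_
    have hinner : ∀ i : Fin m, ((branches F (x i) T).biUnion (fun w =>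
        (Finset.range (T + 1)).image (fun t => x i ++ w.take t))).card ≤ (T + 1) ^ (a + 1) := by
      intro i
      refine le_trans Finset.card_biUnion_le ?_
      have h1 : ∀ w ∈ branches F (x i) T,
          ((Finset.range (T + 1)).image (fun t => x i ++ w.take t)).card ≤ T + 1 := by
        intro w _
        exact le_trans Finset.card_image_le (by simp)
      calc ∑ w ∈ branches F (x i) T, ((Finset.range (T + 1)).image
            (fun t => x i ++ w.take t)).card
          ≤ ∑ _w ∈ branches F (x i) T, (T + 1) := Finset.sum_le_sum h1
        _ = (branches F (x i) T).card * (T + 1) := by rw [Finset.sum_const, smul_eq_mul]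
        _ ≤ (T + 1) ^ a * (T + 1) := Nat.mul_le_mul_right _ (branches_card_le (x i) T hATub)
        _ = (T + 1) ^ (a + 1) := by ring
    calc ∑ i : Fin m, ((branches F (x i) T).biUnion (fun w =>
          (Finset.range (T + 1)).image (fun t => x i ++ w.take t))).card
        ≤ ∑ _i : Fin m, (T + 1) ^ (a + 1) := Finset.sum_le_sum (fun i _ => hinner i)
      _ = m * (T + 1) ^ (a + 1) := by simp [mul_comm]
  have htrajmem : ∀ f, f ∈ F → ∀ i : Fin m, ∀ t, t ≤ T →
      (x i ++ branchOf f (x i) t) ∈ nodes := by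
    intro f hf i t ht
    rw [hnodes]
    simp only [Finset.mem_biUnion, Finset.mem_univ, true_and, Finset.mem_image,
      Finset.mem_range]
    exact ⟨i, branchOf f (x i) T, branchOf_mem_branches hf (x i) T,
      t, by omega, by rw [branchOf_take f (x i) ht]⟩
  set pattern : (List Bool → Bool) → Finset (List Bool) :=
    fun f => nodes.filter (fun p => f p = true) with hpattern
  set 𝒜 : Finset (Finset (List Bool)) :=
    Finset.image (fun g => pattern (φ g)) Finset.univ with h𝒜
  -- distinct patterns for distinct behaviors
  have hagreeval : ∀ g g' : Fin m → Bool, pattern (φ g) = pattern (φ g') → g = g' := by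
    intro g g' hpat
    have hnodeeq : ∀ p ∈ nodes, φ g p = φ g' p := by
      intro p hp
      have h1 : (φ g p = true) ↔ (φ g' p = true) := by
        constructor
        · intro h
          have : p ∈ pattern (φ g) := Finset.mem_filter.mpr ⟨hp, h⟩
          rw [hpat] at this
          exact (Finset.mem_filter.mp this).2
        · intro h
          have : p ∈ pattern (φ g') := Finset.mem_filter.mpr ⟨hp, h⟩
          rw [← hpat] at this
          exact (Finset.mem_filter.mp this).2
      exact bool_eq_of_iff h1
    funext i
    have hbr : branchOf (φ g) (x i) T = branchOf (φ g') (x i) T := by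
      refine branchOf_congr (fun t ht => ?_) T (le_refl T)
      exact hnodeeq _ (htrajmem (φ g) (hφF g) i t (by omega))
    rw [← hφval g i, ← hφval g' i, e2e_eq_getLastD _ _ hT, e2e_eq_getLastD _ _ hT, hbr]
  have hcard𝒜 : 𝒜.card = 2 ^ m := by
    rw [h𝒜, Finset.card_image_of_injective _ hagreeval, Finset.card_univ]
    simp
  -- every shattered set is small and inside nodes
  have hshatsub : ∀ s ∈ 𝒜.shatterer, s ⊆ nodes ∧ s.card ≤ d := by
    intro s hs
    rw [Finset.mem_shatterer] at hs
    have hsub : s ⊆ nodes := by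
      obtain ⟨u, hu, hsu⟩ := hs (Finset.Subset.refl s)
      have hsu2 : s ⊆ u := by
        intro p hp
        have h2 : p ∈ s ∩ u := by rw [hsu]; exact hp
        exact (Finset.mem_inter.mp h2).2
      refine hsu2.trans ?_
      rw [h𝒜] at hu
      obtain ⟨g', -, rfl⟩ := Finset.mem_image.mp hu
      exact Finset.filter_subset _ _
    refine ⟨hsub, hVCub s.card ?_⟩
    set e := s.equivFin with he
    refine ⟨fun i => (e.symm i : List Bool), fun i j hij => ?_, ?_⟩
    · exact e.symm.injective (Subtype.val_injective hij)
    · intro g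
      set t : Finset (List Bool) := s.attach.filter (fun p => g (e p) = true) |>.image
        Subtype.val with ht
      have htsub : t ⊆ s := by
        intro p hp
        rw [ht] at hp
        obtain ⟨q, hq, rfl⟩ := Finset.mem_image.mp hp
        exact q.2
      obtain ⟨u, hu, hsu⟩ := hs htsub
      rw [h𝒜] at hu
      obtain ⟨g', -, rfl⟩ := Finset.mem_image.mp hu
      refine ⟨φ g', hφF g', fun i => ?_⟩
      have hpmem : ((e.symm i : List Bool)) ∈ s := (e.symm i).2
      have hmemnodes : ((e.symm i : List Bool)) ∈ nodes := hsub hpmem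
      have hsubeq : (⟨(e.symm i : List Bool), hpmem⟩ : {p // p ∈ s}) = e.symm i :=
        Subtype.ext rfl
      have hiff : (φ g' (e.symm i : List Bool) = true) ↔ (g i = true) := by
        constructor
        · intro h
          have hpu : (e.symm i : List Bool) ∈ pattern (φ g') :=
            Finset.mem_filter.mpr ⟨hmemnodes, h⟩
          have hpt : (e.symm i : List Bool) ∈ t := by
            rw [← hsu]
            exact Finset.mem_inter.mpr ⟨hpmem, hpu⟩
          rw [ht] at hpt
          obtain ⟨q, hq, hqv⟩ := Finset.mem_image.mp hpt
          have hq2 := (Finset.mem_filter.mp hq).2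
          have hqe : q = e.symm i := Subtype.ext (by rw [hqv])
          rw [hqe, Equiv.apply_symm_apply] at hq2
          exact hq2
        · intro h
          have hpt : (e.symm i : List Bool) ∈ t := by
            rw [ht]
            refine Finset.mem_image.mpr ⟨⟨(e.symm i : List Bool), hpmem⟩, ?_, rfl⟩
            refine Finset.mem_filter.mpr ⟨Finset.mem_attach _ _, ?_⟩
            rw [hsubeq, Equiv.apply_symm_apply]
            exact h
          rw [← hsu] at hpt
          have hpu := (Finset.mem_inter.mp hpt).2
          exact (Finset.mem_filter.mp hpu).2
      exact bool_eq_of_iff hiff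
  -- Sauer-Shelah chain
  have hchain : 𝒜.shatterer.card ≤ (nodes.card + 1) ^ d := by
    have hsub2 : 𝒜.shatterer ⊆ (Finset.range (d + 1)).biUnion
        (fun j => Finset.powersetCard j nodes) := by
      intro s hs
      obtain ⟨h1, h2⟩ := hshatsub s hs
      simp only [Finset.mem_biUnion, Finset.mem_range, Finset.mem_powersetCard]
      exact ⟨s.card, by omega, h1, rfl⟩
    calc 𝒜.shatterer.card ≤ _ := Finset.card_le_card hsub2
      _ ≤ ∑ j ∈ Finset.range (d + 1), (Finset.powersetCard j nodes).card :=
          Finset.card_biUnion_le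
      _ = ∑ j ∈ Finset.range (d + 1), nodes.card.choose j := by
          exact Finset.sum_congr rfl (fun j _ => by rw [Finset.card_powersetCard])
      _ ≤ (nodes.card + 1) ^ d := sum_choose_le_pow nodes.card d
  calc 2 ^ m = 𝒜.card := hcard𝒜.symm
    _ ≤ 𝒜.shatterer.card := Finset.card_le_card_shatterer 𝒜
    _ ≤ (nodes.card + 1) ^ d := hchain
    _ ≤ (m * (T + 1) ^ (a + 1) + 1) ^ d := Nat.pow_le_pow_left (by omega) d
end


lemma e2e_zero (f : List Bool → Bool) (x : List Bool) : e2e f 0 x = x.getLastD false := by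
  simp [e2e]

lemma nat_bound {m T a d : ℕ} (hm : 2 ≤ m) (hT : 1 ≤ T) (ha : 1 ≤ a) :
    (m * (T + 1) ^ (a + 1) + 1) ^ d ≤ (m * T) ^ (6 * a * d) := by
  have hpos : 1 ≤ m ^ (a + 2) * T ^ (a + 1) :=
    Nat.one_le_iff_ne_zero.mpr (by positivity)
  have h1 : m * (T + 1) ^ (a + 1) + 1 ≤ (m * T) ^ (a + 3) := by
    calc m * (T + 1) ^ (a + 1) + 1 ≤ m * (2 * T) ^ (a + 1) + 1 := by
          gcongr <;> omega
      _ = m * (2 ^ (a + 1) * T ^ (a + 1)) + 1 := by rw [mul_pow]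
      _ ≤ m * (m ^ (a + 1) * T ^ (a + 1)) + 1 := by
          gcongr <;> first | omega | exact Nat.pow_le_pow_left hm _
      _ = m ^ (a + 2) * T ^ (a + 1) + 1 := by ring
      _ ≤ 2 * (m ^ (a + 2) * T ^ (a + 1)) := by nlinarith [hpos]
      _ ≤ m * (m ^ (a + 2) * T ^ (a + 1)) := by
          exact Nat.mul_le_mul_right _ hm
      _ = m ^ (a + 3) * T ^ (a + 1) := by ring
      _ ≤ m ^ (a + 3) * T ^ (a + 3) := by
          gcongr <;> first | omega | exact Nat.pow_le_pow_right hT (by omega)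
      _ = (m * T) ^ (a + 3) := by rw [mul_pow]
  calc (m * (T + 1) ^ (a + 1) + 1) ^ d ≤ ((m * T) ^ (a + 3)) ^ d :=
        Nat.pow_le_pow_left h1 d
    _ = (m * T) ^ ((a + 3) * d) := by rw [← pow_mul]
    _ ≤ (m * T) ^ (6 * a * d) := by
        refine Nat.pow_le_pow_right (by nlinarith) ?_
        have h2 : a + 3 ≤ 6 * a := by omega
        calc (a + 3) * d ≤ (6 * a) * d := Nat.mul_le_mul_right d h2
          _ = 6 * a * d := rfl

lemma exists_both_values {F : Set (List Bool → Bool)} {T m : ℕ} {x : Fin m → List Bool}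
    (hm : 0 < m) (hshat : ∀ g : Fin m → Bool, ∃ f ∈ F, ∀ i, e2e f T (x i) = g i) :
    ∃ p : List Bool, ∀ bb : Bool, ∃ f ∈ F, f p = bb := by
  set i0 : Fin m := ⟨0, hm⟩ with hi0
  obtain ⟨f, hf, h1⟩ := hshat (fun _ => true)
  obtain ⟨f', hf', h2⟩ := hshat (fun _ => false)
  rcases Nat.eq_zero_or_pos T with rfl | hT
  · exfalso
    have e1 := h1 i0
    have e2 := h2 i0
    rw [e2e_zero] at e1 e2
    rw [e1] at e2
    exact Bool.noConfusion e2
  · have hne : branchOf f (x i0) T ≠ branchOf f' (x i0) T := by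
      intro h
      have e1 := h1 i0
      have e2 := h2 i0
      rw [e2e_eq_getLastD _ _ hT] at e1 e2
      rw [← h, e1] at e2
      exact Bool.noConfusion e2
    have hnall : ¬ ∀ t, t < T → f (x i0 ++ branchOf f (x i0) t) =
        f' (x i0 ++ branchOf f (x i0) t) := by
      intro hall
      exact hne (branchOf_congr hall T (le_refl T))
    push_neg at hnall
    obtain ⟨t, ht, hneq⟩ := hnall
    refine ⟨x i0 ++ branchOf f (x i0) t, fun bb => ?_⟩
    set p := x i0 ++ branchOf f (x i0) t
    cases hfp : f p
    · cases hbb : bb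
      · exact ⟨f, hf, hfp⟩
      · refine ⟨f', hf', ?_⟩
        cases hfp' : f' p
        · rw [hfp, hfp'] at hneq; exact absurd rfl hneq
        · rfl
    · cases hbb : bb
      · refine ⟨f', hf', ?_⟩
        cases hfp' : f' p
        · rfl
        · rw [hfp, hfp'] at hneq; exact absurd rfl hneq
      · exact ⟨f, hf, hfp⟩


/-- If `F` has VC dimension `d` and autoregressive tree dimension `a ≥ 1`, then any
set of size `m ≥ 2` shattered by `F^{e2e,T}` satisfies `2^m ≤ (mT)^{6ad}`;
consequently, for `T ≥ 20ad`, `VC(F^{e2e,T}) ≤ 20·a·d·log₂ T`. -/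
theorem stmt_19 (F : Set (List Bool → Bool)) (d a T : ℕ) (ha : 1 ≤ a)
    (hVC : IsGreatest {n : ℕ | ∃ x : Fin n → List Bool, Function.Injective x ∧
      ∀ g : Fin n → Bool, ∃ f ∈ F, ∀ i, f (x i) = g i} d)
    (hAT : IsGreatest {n : ℕ | ∃ (x : List Bool) (T' : ℕ) (ι : List Bool → List Bool),
      LeveledEmbedding n T' ι ∧
      ∀ ℓ : List Bool, ℓ.length = n → ∃ f ∈ F,
        ∀ i : ℕ, i < n → f (x ++ ι (ℓ.take i)) = ℓ.getD i false} a) :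
    (∀ (m : ℕ) (x : Fin m → List Bool), 2 ≤ m → Function.Injective x →
      (∀ g : Fin m → Bool, ∃ f ∈ F, ∀ i, e2e f T (x i) = g i) →
      (2 : ℝ) ^ m ≤ ((m * T : ℕ) : ℝ) ^ (6 * a * d)) ∧
    (20 * a * d ≤ T →
      ∀ (m : ℕ) (x : Fin m → List Bool), Function.Injective x →
        (∀ g : Fin m → Bool, ∃ f ∈ F, ∀ i, e2e f T (x i) = g i) →
        (m : ℝ) ≤ 20 * a * d * Real.logb 2 T) := by
  have hVCub : ∀ n : ℕ, (∃ x' : Fin n → List Bool, Function.Injective x' ∧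
      ∀ g : Fin n → Bool, ∃ f ∈ F, ∀ i, f (x' i) = g i) → n ≤ d :=
    fun n hn => hVC.2 hn
  have hATub : ∀ n : ℕ, (∃ (x : List Bool) (T' : ℕ) (ι : List Bool → List Bool),
      LeveledEmbedding n T' ι ∧
      ∀ ℓ : List Bool, ℓ.length = n → ∃ f ∈ F,
        ∀ i : ℕ, i < n → f (x ++ ι (ℓ.take i)) = ℓ.getD i false) → n ≤ a :=
    fun n hn => hAT.2 hn
  have part1 : ∀ (m : ℕ) (x : Fin m → List Bool), 2 ≤ m → Function.Injective x →
      (∀ g : Fin m → Bool, ∃ f ∈ F, ∀ i, e2e f T (x i) = g i) →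
      (2 : ℝ) ^ m ≤ ((m * T : ℕ) : ℝ) ^ (6 * a * d) := by
    intro m x hm hinj hshat
    rcases Nat.eq_zero_or_pos T with rfl | hT
    · exfalso
      obtain ⟨f, hf, h1⟩ := hshat (fun _ => true)
      obtain ⟨f', hf', h2⟩ := hshat (fun _ => false)
      have e1 := h1 ⟨0, by omega⟩
      have e2 := h2 ⟨0, by omega⟩
      rw [e2e_zero] at e1 e2
      rw [e1] at e2
      exact Bool.noConfusion e2
    · have hnat := main_count x hVCub hATub hT hshat
      have hnat2 : 2 ^ m ≤ (m * T) ^ (6 * a * d) :=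
        le_trans hnat (nat_bound hm hT ha)
      calc (2 : ℝ) ^ m = ((2 ^ m : ℕ) : ℝ) := by push_cast; ring
        _ ≤ (((m * T) ^ (6 * a * d) : ℕ) : ℝ) := by exact_mod_cast hnat2
        _ = ((m * T : ℕ) : ℝ) ^ (6 * a * d) := by push_cast; ring
  refine ⟨part1, ?_⟩
  intro hT20 m x hinj hshat
  rcases Nat.eq_zero_or_pos d with rfl | hd
  · -- d = 0 : show m = 0
    rcases Nat.eq_zero_or_pos m with rfl | hm
    · simp
    · exfalso
      obtain ⟨p, hp⟩ := exists_both_values hm hshat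
      have h1 : 1 ≤ 0 := hVCub 1 ⟨fun _ => p, fun i j _ => Subsingleton.elim i j, fun g => by
        obtain ⟨f, hf, hv⟩ := hp (g 0)
        refine ⟨f, hf, fun i => ?_⟩
        have hi : i = 0 := Subsingleton.elim i 0
        rw [hi]
        exact hv⟩
      omega
  · -- d ≥ 1
    have had : 1 ≤ a * d := Nat.one_le_iff_ne_zero.mpr (by positivity)
    have hadR : (1 : ℝ) ≤ (a : ℝ) * d := by exact_mod_cast had
    have hT20' : 20 ≤ T := le_trans (by nlinarith) hT20
    have hl2pos : (0 : ℝ) < Real.log 2 := Real.log_pos (by norm_num)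
    have hTr : (20 : ℝ) ≤ (T : ℝ) := by exact_mod_cast hT20'
    have hlogb1 : (1 : ℝ) ≤ Real.logb 2 T := by
      rw [Real.logb, le_div_iff₀ hl2pos]
      have : Real.log 2 ≤ Real.log T := Real.log_le_log (by norm_num) (by linarith)
      linarith
    rcases Nat.lt_or_ge m 2 with hm2 | hm2
    · have hm1 : (m : ℝ) ≤ 1 := by exact_mod_cast Nat.lt_succ_iff.mp hm2
      have hge : (20 : ℝ) ≤ 20 * (a : ℝ) * d * Real.logb 2 T := by
        nlinarith [mul_nonneg (by linarith : (0:ℝ) ≤ (a:ℝ)*d)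
          (by linarith : (0:ℝ) ≤ Real.logb 2 (T:ℝ) - 1)]
      linarith
    · by_contra hcon
      push_neg at hcon
      have hpart := part1 m x hm2 hinj hshat
      have hM2 : (2 : ℝ) ≤ (m : ℝ) := by exact_mod_cast hm2
      have hMpos : (0 : ℝ) < (m : ℝ) := by linarith
      have hTpos : (0 : ℝ) < (T : ℝ) := by linarith
      have hbpos : (0 : ℝ) < 20 * (a : ℝ) * d := by nlinarith
      have hbge : (20 : ℝ) ≤ 20 * (a : ℝ) * d := by nlinarith
      have hbT : 20 * (a : ℝ) * d ≤ (T : ℝ) := by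
        have : ((20 * a * d : ℕ) : ℝ) ≤ ((T : ℕ) : ℝ) := by exact_mod_cast hT20
        push_cast at this
        linarith
      -- logarithms
      have hcastMT : ((m * T : ℕ) : ℝ) = (m : ℝ) * (T : ℝ) := by push_cast; ring
      have hlog1 : Real.log ((2 : ℝ) ^ m) ≤ Real.log (((m * T : ℕ) : ℝ) ^ (6 * a * d)) :=
        Real.log_le_log (by positivity) hpart
      rw [Real.log_pow, Real.log_pow, hcastMT,
        Real.log_mul (ne_of_gt hMpos) (ne_of_gt hTpos)] at hlog1
      have hcast6 : ((6 * a * d : ℕ) : ℝ) = 6 * (a : ℝ) * d := by push_cast; ring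
      rw [hcast6] at hlog1
      -- hlog1 : ↑m * log 2 ≤ 6*a*d * (log m + log T)
      have A2 : 20 * (a : ℝ) * d * Real.log T < (m : ℝ) * Real.log 2 := by
        rw [Real.logb] at hcon
        have h2 : 20 * (a : ℝ) * d * Real.log T / Real.log 2 < (m : ℝ) := by
          rw [mul_div_assoc]
          exact hcon
        exact (div_lt_iff₀ hl2pos).mp h2
      have h8bpos : (0 : ℝ) < 8 * (20 * (a : ℝ) * d) := by linarith
      have hxpos : (0 : ℝ) < (m : ℝ) / (8 * (20 * (a : ℝ) * d)) := by positivity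
      have h3 := Real.log_le_sub_one_of_pos hxpos
      rw [Real.log_div (ne_of_gt hMpos) (ne_of_gt h8bpos)] at h3
      have h8b : Real.log (8 * (20 * (a : ℝ) * d)) =
          3 * Real.log 2 + Real.log (20 * (a : ℝ) * d) := by
        rw [Real.log_mul (by norm_num) (ne_of_gt hbpos)]
        congr 1
        rw [show (8 : ℝ) = 2 ^ 3 by norm_num, Real.log_pow]
        push_cast
        ring
      rw [h8b] at h3
      -- h3 : log m - (3 log 2 + log b) ≤ m/(8b) - 1
      have A3 : (Real.log m - 3 * Real.log 2 - Real.log (20 * (a : ℝ) * d) + 1) *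
          (8 * (20 * (a : ℝ) * d)) ≤ (m : ℝ) := by
        rw [← le_div_iff₀ h8bpos]
        linarith
      have A4 : Real.log (20 * (a : ℝ) * d) ≤ Real.log T :=
        Real.log_le_log hbpos hbT
      have A5 : 4 * Real.log 2 ≤ Real.log (20 * (a : ℝ) * d) := by
        have h16 : Real.log (16 : ℝ) ≤ Real.log (20 * (a : ℝ) * d) :=
          Real.log_le_log (by norm_num) (by linarith)
        rw [show (16 : ℝ) = 2 ^ 4 by norm_num, Real.log_pow] at h16
        push_cast at h16
        linarith
      have A6a : (0.6931 : ℝ) < Real.log 2 := by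
        have := Real.log_two_gt_d9
        linarith
      have A6b : Real.log 2 < (0.6932 : ℝ) := by
        have := Real.log_two_lt_d9
        linarith
      -- derived facts
      have s1 : 7 * ((m : ℝ) * Real.log 2) ≤ 3 * ((20 * (a : ℝ) * d) * Real.log m) := by
        linarith [hlog1, A2]
      have s3 : (20 * (a : ℝ) * d) * Real.log (20 * (a : ℝ) * d) ≤
          (20 * (a : ℝ) * d) * Real.log T :=
        mul_le_mul_of_nonneg_left A4 (by linarith)
      have s5 : (20 * (a : ℝ) * d) * (4 * Real.log 2) ≤
          (20 * (a : ℝ) * d) * Real.log (20 * (a : ℝ) * d) :=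
        mul_le_mul_of_nonneg_left A5 (by linarith)
      have s6 : 4 * ((20 * (a : ℝ) * d) * Real.log 2) < (m : ℝ) * Real.log 2 := by
        linarith [s5, s3, A2]
      have s7 : 4 * (20 * (a : ℝ) * d) < (m : ℝ) := by
        by_contra h7
        push_neg at h7
        have := mul_le_mul_of_nonneg_right h7 (le_of_lt hl2pos)
        linarith [s6, this]
      have hprod : (0 : ℝ) ≤ ((m : ℝ) - 4 * (20 * (a : ℝ) * d)) * (32 * Real.log 2 - 3) :=
        mul_nonneg (by linarith) (by linarith)
      have blpos : (0 : ℝ) < (20 * (a : ℝ) * d) * Real.log 2 :=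
        mul_pos hbpos hl2pos
      linarith [s1, A3, s3, A2, hprod, blpos, hbpos]
end
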